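/- arXiv:0806.1210 — 8 statements merged into one kernel-verified Lean document; each statement's English description precedes it below -/
import Mathlib

section
/- A sequence (a_1, ..., a_{2^{n+1}-1}) in {+1,-1} is an (n+1)-folding sequence if and only if the subsequence of even-indexed terms (a_2, a_4, ..., a_{2^{n+1}-2}) is an n-folding sequence and a_{1+2k} = (-1)^k a_1 for 0 ≤ k ≤ 2^n - 1. -/
/-- Reversal-with-negation of a finite ±1 word. -/
def negRev (S : List ℤ) : List ℤ := (S.map (fun x => -x)).reverse

/-- `IsFold n S` : `S` is an `n`-folding sequence. -/
inductive IsFold : ℕ → List ℤ → Prop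
  | zero : IsFold 0 []
  | succ (n : ℕ) (S : List ℤ) (ε : ℤ) : IsFold n S → (ε = 1 ∨ ε = -1) →
      IsFold (n + 1) (negRev S ++ ε :: S)

/-- The subword `(a (h+1), …, a (h+t))` of a bi-infinite sequence. -/
def subwordAt (a : ℤ → ℤ) (h : ℤ) (t : ℕ) : List ℤ :=
  (List.range t).map fun i => a (h + 1 + (i : ℤ))

/-- `T` is a finite subword of the bi-infinite sequence `a`. -/
def IsSubword (a : ℤ → ℤ) (T : List ℤ) : Prop := ∃ h : ℤ, T = subwordAt a h T.length

/-- A finite folding sequence: a subword of some `n`-folding sequence. -/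
def IsFiniteFold (T : List ℤ) : Prop := ∃ n S, IsFold n S ∧ T <:+: S

/-- The sequence takes values in `{+1, -1}`. -/
def PM (a : ℤ → ℤ) : Prop := ∀ h : ℤ, a h = 1 ∨ a h = -1

/-- `a (hn + k·2^(n+1)) = (-1)^k · a hn` for all `k`. -/
def AltProp (a : ℤ → ℤ) (n : ℕ) (hn : ℤ) : Prop :=
  ∀ k : ℤ, a (hn + k * 2 ^ (n + 1)) = if Even k then a hn else -a hn

/-- A complete folding sequence (alternation characterization). -/
def CompleteFold (a : ℤ → ℤ) : Prop := PM a ∧ ∀ n : ℕ, ∃ hn : ℤ, AltProp a n hn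

/-- Rotate a direction left (`η = 1`) or right (otherwise). -/
def rot (d : ℤ × ℤ) (η : ℤ) : ℤ × ℤ := if η = 1 then (-d.2, d.1) else (d.2, -d.1)

/-- Unit lattice direction. -/
def IsUnitVec (d : ℤ × ℤ) : Prop := d = (1, 0) ∨ d = (0, 1) ∨ d = (-1, 0) ∨ d = (0, -1)

/-- Direction of the `i`-th step of the curve with turn word `η`. -/
def dirAt (d0 : ℤ × ℤ) (η : List ℤ) (i : ℕ) : ℤ × ℤ := (η.take i).foldl rot d0

/-- `i`-th vertex of the curve started at `X0` with initial direction `d0`. -/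
def vertexAt (X0 d0 : ℤ × ℤ) (η : List ℤ) (i : ℕ) : ℤ × ℤ :=
  X0 + ∑ j ∈ Finset.range i, dirAt d0 η j

/-- `i`-th (unordered) unit edge of the curve. -/
def edgeAt (X0 d0 : ℤ × ℤ) (η : List ℤ) (i : ℕ) : Sym2 (ℤ × ℤ) :=
  s(vertexAt X0 d0 η i, vertexAt X0 d0 η (i + 1))

/-- A complete folding curve, given by its vertex function. -/
def IsCFCurve (V : ℤ → ℤ × ℤ) : Prop :=
  (∀ i : ℤ, IsUnitVec (V (i + 1) - V i)) ∧
  ∃ η : ℤ → ℤ, CompleteFold η ∧ ∀ i : ℤ, V (i + 2) - V (i + 1) = rot (V (i + 1) - V i) (η i)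

/-- Two bi-infinite curves are disjoint: no common unit edge, and at every common
lattice point the four incident traversed edges point in four distinct directions
(the curves do not cross). -/
def CurvesDisjoint (V W : ℤ → ℤ × ℤ) : Prop :=
  (∀ i j : ℤ, s(V i, V (i + 1)) ≠ s(W j, W (j + 1))) ∧
  ∀ i j : ℤ, V i = W j →
    List.Pairwise (· ≠ ·) [V (i - 1) - V i, V (i + 1) - V i, W (j - 1) - W j, W (j + 1) - W j]


section FoldHelpers

private lemma gD (l : List ℤ) {i : ℕ} (h : i < l.length) : l.getD i 0 = l[i] :=
  List.getD_eq_getElem l 0 h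

private lemma ext_getD {l₁ l₂ : List ℤ} (h : l₁.length = l₂.length)
    (h' : ∀ i, i < l₁.length → l₁.getD i 0 = l₂.getD i 0) : l₁ = l₂ := by
  apply List.ext_getElem h
  intro i h1 h2
  rw [← gD _ h1, ← gD _ h2]
  exact h' i h1

lemma negRev_length (S : List ℤ) : (negRev S).length = S.length := by simp [negRev]

lemma negRev_getD (S : List ℤ) {i : ℕ} (h : i < S.length) :
    (negRev S).getD i 0 = -(S.getD (S.length - 1 - i) 0) := by
  rw [gD _ (by rw [negRev_length]; exact h), gD _ (by omega)]
  simp only [negRev, List.getElem_reverse, List.length_map, List.getElem_map]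

lemma gl (S : List ℤ) (ε : ℤ) {i : ℕ} (h : i < S.length) :
    (negRev S ++ ε :: S).getD i 0 = -(S.getD (S.length - 1 - i) 0) := by
  rw [List.getD_append _ _ _ _ (by rw [negRev_length]; exact h)]
  exact negRev_getD S h

lemma gm (S : List ℤ) (ε : ℤ) : (negRev S ++ ε :: S).getD S.length 0 = ε := by
  rw [List.getD_append_right _ _ _ _ (le_of_eq (negRev_length S)), negRev_length]
  simp

lemma gr (S : List ℤ) (ε : ℤ) (j : ℕ) :
    (negRev S ++ ε :: S).getD (S.length + 1 + j) 0 = S.getD j 0 := by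
  rw [List.getD_append_right _ _ _ _ (by rw [negRev_length]; omega), negRev_length]
  rw [show S.length + 1 + j - S.length = j + 1 from by omega]
  simp

lemma gm' (S : List ℤ) (ε : ℤ) {i : ℕ} (h : i = S.length) :
    (negRev S ++ ε :: S).getD i 0 = ε := by rw [h]; exact gm S ε

lemma gr' (S : List ℤ) (ε : ℤ) {i j : ℕ} (h : i = S.length + 1 + j) :
    (negRev S ++ ε :: S).getD i 0 = S.getD j 0 := by rw [h]; exact gr S ε j

lemma ite_even (c d : ℤ) (m : ℕ) (h : m % 2 = 0) : (if Even m then c else d) = c :=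
  if_pos (Nat.even_iff.mpr h)

lemma ite_odd (c d : ℤ) (m : ℕ) (h : m % 2 = 1) : (if Even m then c else d) = d :=
  if_neg (by rw [Nat.even_iff]; omega)

lemma fold_length {n : ℕ} {S : List ℤ} (h : IsFold n S) : S.length = 2 ^ n - 1 := by
  induction h with
  | zero => rfl
  | succ n S ε h hε ih =>
    have h1 : 1 ≤ 2 ^ n := Nat.one_le_two_pow
    have h2 : (2:ℕ) ^ (n + 1) = 2 * 2 ^ n := by ring
    simp only [List.length_append, List.length_cons, negRev_length, ih]
    omega

lemma alt2 {n : ℕ} {S : List ℤ} (h : IsFold n S) :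
    ∀ i, Even i → i + 2 < S.length → S.getD (i + 2) 0 = -(S.getD i 0) := by
  induction h with
  | zero => intro i _ h; simp at h
  | succ n U ε hU hε ih =>
    intro i hi hlt
    have hm : U.length = 2 ^ n - 1 := fold_length hU
    have h1 : 1 ≤ 2 ^ n := Nat.one_le_two_pow
    set m := U.length with hmdef
    have hlen : (negRev U ++ ε :: U).length = 2 * m + 1 := by
      simp [negRev_length, hmdef]; omega
    rw [hlen] at hlt
    have hi2 : i % 2 = 0 := Nat.even_iff.mp hi
    have hmm : m % 2 = 1 ∨ m = 0 := by
      cases n with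
      | zero => right; omega
      | succ k =>
        left
        have : (2:ℕ) ^ (k + 1) = 2 * 2 ^ k := by ring
        omega
    rcases hmm with hm1 | hm0
    swap
    · omega
    have hcase : i + 2 < m ∨ i + 1 = m ∨ m + 1 ≤ i := by omega
    rcases hcase with hc | hc | hc
    · rw [gl U ε (show i + 2 < m from hc), gl U ε (show i < m from by omega)]
      have he : Even (m - 3 - i) := by rw [Nat.even_iff]; omega
      have := ih (m - 3 - i) he (by omega)
      rw [show m - 3 - i + 2 = m - 1 - i from by omega] at this
      rw [show m - 1 - (i + 2) = m - 3 - i from by omega, this]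
      ring
    · rw [show i + 2 = m + 1 + 0 from by omega, gr, gl U ε (show i < m from by omega)]
      rw [show m - 1 - i = 0 from by omega]
      ring
    · obtain ⟨j, rfl⟩ : ∃ j, i = m + 1 + j := ⟨i - m - 1, by omega⟩
      rw [show m + 1 + j + 2 = m + 1 + (j + 2) from by omega, gr, gr]
      exact ih j (by rw [Nat.even_iff]; omega) (by omega)

lemma alt3 {n : ℕ} {S : List ℤ} (h : IsFold n S) :
    ∀ k, 2 * k < S.length → S.getD (2 * k) 0 = (-1) ^ k * S.getD 0 0 := by
  intro k
  induction k with
  | zero => intro _; simp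
  | succ k ih =>
    intro hk
    have h1 : 2 * k < S.length := by omega
    have h2 := alt2 h (2 * k) (even_two_mul k) (by omega)
    rw [show 2 * (k + 1) = 2 * k + 2 from by ring, h2, ih h1]
    ring

/-- Odd-position subword. -/
def odds (t : ℕ) (b : List ℤ) : List ℤ := (List.range t).map fun k => b.getD (2 * k + 1) 0

lemma odds_length (t : ℕ) (b : List ℤ) : (odds t b).length = t := by simp [odds]

lemma odds_getD (t : ℕ) (b : List ℤ) {k : ℕ} (h : k < t) :
    (odds t b).getD k 0 = b.getD (2 * k + 1) 0 := by
  rw [gD _ (by rw [odds_length]; exact h)]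
  simp [odds]

lemma odds_struct (S : List ℤ) (ε : ℤ) (u : ℕ) (hS : S.length = 2 * u + 1) :
    odds (2 * u + 1) (negRev S ++ ε :: S) = negRev (odds u S) ++ ε :: odds u S := by
  apply ext_getD
  · simp [odds_length, negRev_length]; omega
  intro k hk
  rw [odds_length] at hk
  rw [odds_getD _ _ hk]
  have hou : (odds u S).length = u := odds_length u S
  rcases lt_trichotomy k u with hc | hc | hc
  · rw [gl (odds u S) ε (by rw [hou]; exact hc), hou]
    rw [gl S ε (show 2 * k + 1 < S.length from by omega), hS]
    rw [show 2 * u + 1 - 1 - (2 * k + 1) = 2 * (u - 1 - k) + 1 from by omega]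
    rw [← odds_getD u S (show u - 1 - k < u from by omega)]
  · rw [gm' S ε (show 2 * k + 1 = S.length from by omega),
      gm' (odds u S) ε (show k = (odds u S).length from by omega)]
  · obtain ⟨j, rfl⟩ : ∃ j, k = u + 1 + j := ⟨k - u - 1, by omega⟩
    rw [gr' S ε (show 2 * (u + 1 + j) + 1 = S.length + 1 + (2 * j + 1) from by omega),
      gr' (odds u S) ε (show u + 1 + j = (odds u S).length + 1 + j from by omega),
      odds_getD u S (show j < u from by omega)]

lemma oddsFold : ∀ {n : ℕ} {b : List ℤ}, IsFold (n + 1) b → IsFold n (odds (2 ^ n - 1) b) := by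
  intro n
  induction n with
  | zero =>
    intro b _
    have : odds (2 ^ 0 - 1) b = [] := by simp [odds]
    rw [this]
    exact IsFold.zero
  | succ n ih =>
    intro b h
    cases h with
    | succ _ S ε hS hε =>
      have hlen : S.length = 2 * (2 ^ n - 1) + 1 := by
        have h1 : 1 ≤ 2 ^ n := Nat.one_le_two_pow
        have h2 : (2:ℕ) ^ (n + 1) = 2 * 2 ^ n := by ring
        rw [fold_length hS]; omega
      have e : 2 ^ (n + 1) - 1 = 2 * (2 ^ n - 1) + 1 := by
        have h1 : 1 ≤ 2 ^ n := Nat.one_le_two_pow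
        have h2 : (2:ℕ) ^ (n + 1) = 2 * 2 ^ n := by ring
        omega
      rw [e, odds_struct S ε _ hlen]
      exact IsFold.succ _ _ _ (ih hS) hε

lemma negpal {n : ℕ} {T : List ℤ} (h : IsFold n T) :
    ∀ k, 2 * k + 2 ≤ T.length → T.getD k 0 = -(T.getD (T.length - 1 - k) 0) := by
  cases h with
  | zero => intro k hk; simp at hk
  | succ n U ε hU hε =>
    intro k hk
    have hlen : (negRev U ++ ε :: U).length = 2 * U.length + 1 := by
      simp [negRev_length]; omega
    rw [hlen] at hk ⊢
    have hk' : k < U.length := by omega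
    rw [gl U ε hk']
    rw [show 2 * U.length + 1 - 1 - k = U.length + 1 + (U.length - 1 - k) from by omega, gr]

lemma fwd {n : ℕ} {b : List ℤ} (h : IsFold (n + 1) b) :
    ∀ k < 2 ^ n, b.getD (2 * k) 0 = if Even k then b.getD 0 0 else -(b.getD 0 0) := by
  intro k hk
  have hlen := fold_length h
  have h1 : 1 ≤ 2 ^ n := Nat.one_le_two_pow
  have h2 : (2:ℕ) ^ (n + 1) = 2 * 2 ^ n := by ring
  rw [alt3 h k (by omega)]
  rcases Nat.even_or_odd k with he | ho
  · rw [if_pos he, he.neg_one_pow, one_mul]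
  · rw [if_neg (by simpa [Nat.odd_iff, Nat.even_iff] using ho), ho.neg_one_pow]
    ring

lemma bwd : ∀ (n : ℕ) (b : List ℤ), b.length = 2 ^ (n + 1) - 1 →
    (∀ x ∈ b, x = 1 ∨ x = -1) → IsFold n (odds (2 ^ n - 1) b) →
    (∀ k < 2 ^ n, b.getD (2 * k) 0 = if Even k then b.getD 0 0 else -(b.getD 0 0)) →
    IsFold (n + 1) b := by
  intro n
  induction n with
  | zero =>
    intro b hlen hpm _ _
    rcases b with _ | ⟨x, _ | ⟨y, t⟩⟩ <;> simp at hlen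
    have hx : x = 1 ∨ x = -1 := hpm x (by simp)
    have : ([x] : List ℤ) = negRev [] ++ x :: [] := rfl
    rw [this]
    exact IsFold.succ 0 [] x IsFold.zero hx
  | succ n ih =>
    intro b hlen hpm hT halt
    have h1 : 1 ≤ 2 ^ n := Nat.one_le_two_pow
    have hpow : (2:ℕ) ^ (n + 1) = 2 * 2 ^ n := by ring
    have hpow2 : (2:ℕ) ^ (n + 2) = 2 * 2 ^ (n + 1) := by ring
    generalize hTeq : odds (2 ^ (n + 1) - 1) b = T at hT
    cases hT with
    | succ _ U δ hU hδ =>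
      have hU_len : U.length = 2 ^ n - 1 := fold_length hU
      set S := b.drop (2 ^ (n + 1)) with hSdef
      have hSlen : S.length = 2 ^ (n + 1) - 1 := by
        rw [hSdef, List.length_drop, hlen]; omega
      have hSg : ∀ j, S.getD j 0 = b.getD (2 ^ (n + 1) + j) 0 := by
        intro j
        by_cases hj : 2 ^ (n + 1) + j < b.length
        · rw [gD _ (by rw [hSlen]; omega), gD _ hj]
          simp [hSdef]
        · rw [List.getD_eq_default _ _ (by rw [hSlen]; omega),
            List.getD_eq_default _ _ (by omega)]
      have hSpm : ∀ x ∈ S, x = 1 ∨ x = -1 := fun x hx => hpm x (List.mem_of_mem_drop hx)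
      have hodds : odds (2 ^ n - 1) S = U := by
        apply ext_getD
        · rw [odds_length, hU_len]
        intro k hk
        rw [odds_length] at hk
        rw [odds_getD _ _ hk, hSg]
        rw [show 2 ^ (n + 1) + (2 * k + 1) = 2 * (2 ^ n + k) + 1 from by omega]
        rw [← odds_getD (2 ^ (n + 1) - 1) b (k := 2 ^ n + k) (by omega), hTeq]
        rw [show 2 ^ n + k = U.length + 1 + k from by omega, gr]
      have hSalt : ∀ k < 2 ^ n, S.getD (2 * k) 0 = if Even k then S.getD 0 0 else -(S.getD 0 0) := by
        intro k hk
        have e0 : S.getD 0 0 = b.getD (2 * 2 ^ n) 0 := by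
          rw [hSg]; all_goals (congr 1 <;> omega)
        have e1 : S.getD (2 * k) 0 = b.getD (2 * (2 ^ n + k)) 0 := by
          rw [hSg]; all_goals (congr 1 <;> omega)
        rw [e0, e1, halt (2 ^ n) (by omega), halt (2 ^ n + k) (by omega)]
        rcases Nat.mod_two_eq_zero_or_one (2 ^ n) with h2 | h2 <;>
          rcases Nat.mod_two_eq_zero_or_one k with hk2 | hk2
        · rw [ite_even _ _ _ (show (2 ^ n + k) % 2 = 0 from by omega),
            ite_even _ _ _ h2, ite_even _ _ _ hk2]
        · rw [ite_odd _ _ _ (show (2 ^ n + k) % 2 = 1 from by omega),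
            ite_even _ _ _ h2, ite_odd _ _ _ hk2]
        · rw [ite_odd _ _ _ (show (2 ^ n + k) % 2 = 1 from by omega),
            ite_odd _ _ _ h2, ite_even _ _ _ hk2]
        · rw [ite_even _ _ _ (show (2 ^ n + k) % 2 = 0 from by omega),
            ite_odd _ _ _ h2, ite_odd _ _ _ hk2]
          ring
      have hSfold : IsFold (n + 1) S := ih S hSlen hSpm (hodds ▸ hU) hSalt
      set ε := b.getD (2 ^ (n + 1) - 1) 0 with hεdef
      have hεpm : ε = 1 ∨ ε = -1 := by
        rw [hεdef, gD _ (by omega)]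
        exact hpm _ (List.getElem_mem _)
      have hTfold : IsFold (n + 1) (odds (2 ^ (n + 1) - 1) b) := by
        rw [hTeq]; exact IsFold.succ _ _ _ hU hδ
      have hTlen : (odds (2 ^ (n + 1) - 1) b).length = 2 ^ (n + 1) - 1 :=
        odds_length _ _
      have hb : b = negRev S ++ ε :: S := by
        apply ext_getD
        · rw [hlen, List.length_append, List.length_cons, negRev_length, hSlen]; omega
        intro i hi
        rw [hlen] at hi
        rcases lt_trichotomy i (2 ^ (n + 1) - 1) with hc | hc | hc
        · rw [gl S ε (show i < S.length from by omega), hSg, hSlen]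
          rw [show 2 ^ (n + 1) + (2 ^ (n + 1) - 1 - 1 - i) = 2 ^ (n + 2) - 2 - i from by omega]
          rcases Nat.even_or_odd i with ⟨k, hk⟩ | ⟨k, hk⟩
          · rw [show i = 2 * k from by omega,
              show 2 ^ (n + 2) - 2 - 2 * k = 2 * (2 ^ (n + 1) - 1 - k) from by omega,
              halt k (by omega), halt (2 ^ (n + 1) - 1 - k) (by omega)]
            rcases Nat.mod_two_eq_zero_or_one k with hk2 | hk2
            · rw [ite_even _ _ _ hk2,
                ite_odd _ _ _ (show (2 ^ (n + 1) - 1 - k) % 2 = 1 from by omega)]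
              ring
            · rw [ite_odd _ _ _ hk2,
                ite_even _ _ _ (show (2 ^ (n + 1) - 1 - k) % 2 = 0 from by omega)]
          · have hki : k < 2 ^ n - 1 := by omega
            rw [show i = 2 * k + 1 from by omega,
              ← odds_getD (2 ^ (n + 1) - 1) b (k := k) (by omega),
              show 2 ^ (n + 2) - 2 - (2 * k + 1) = 2 * (2 ^ (n + 1) - 2 - k) + 1 from by omega,
              ← odds_getD (2 ^ (n + 1) - 1) b (k := 2 ^ (n + 1) - 2 - k) (by omega)]
            have hnp := negpal hTfold k (by rw [hTlen]; omega)
            rw [hTlen, show 2 ^ (n + 1) - 1 - 1 - k = 2 ^ (n + 1) - 2 - k from by omega] at hnp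
            exact hnp
        · rw [gm' S ε (show i = S.length from by omega), hεdef]
          all_goals (congr 1 <;> omega)
        · obtain ⟨j, hj⟩ : ∃ j, i = S.length + 1 + j := ⟨i - S.length - 1, by omega⟩
          rw [gr' S ε hj, hSg]
          all_goals (congr 1 <;> omega)
      rw [hb]
      exact IsFold.succ _ _ _ hSfold hεpm

end FoldHelpers

theorem statement2 (n : ℕ) (b : List ℤ) (hlen : b.length = 2 ^ (n + 1) - 1)
    (hpm : ∀ x ∈ b, x = 1 ∨ x = -1) :
    IsFold (n + 1) b ↔
      (IsFold n ((List.range (2 ^ n - 1)).map fun k => b.getD (2 * k + 1) 0) ∧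
        ∀ k < 2 ^ n, b.getD (2 * k) 0 = if Even k then b.getD 0 0 else -(b.getD 0 0)) := by
  constructor
  · intro h
    exact ⟨oddsFold h, fwd h⟩
  · rintro ⟨h1, h2⟩
    exact bwd n b hlen hpm h1 h2
end

section
/- A bi-infinite sequence (a_h)_{h ∈ ℤ} with values in {+1,-1} is a complete folding sequence (i.e., every finite subword of it is a subword of some n-folding sequence) if and only if for every n ∈ ℕ there exists h_n ∈ ℤ such that a_{h_n + k·2^{n+1}} = (-1)^k a_{h_n} for every k ∈ ℤ. -/
lemma subwordAt_eq (a : ℤ → ℤ) (c : ℤ) (t : ℕ) :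
    subwordAt a c t = (List.range t).map fun i : ℕ => a (c + 1 + i) := by
  simp only [subwordAt, List.pure_def, List.bind_eq_flatMap, ← List.map_eq_flatMap, List.map_map]
  rfl

lemma subwordAt_length (a : ℤ → ℤ) (c : ℤ) (t : ℕ) : (subwordAt a c t).length = t := by
  simp [subwordAt_eq]

lemma subwordAt_add (a : ℤ → ℤ) (c : ℤ) (s t : ℕ) :
    subwordAt a c (s + t) = subwordAt a c s ++ subwordAt a (c + s) t := by
  simp only [subwordAt_eq, List.range_add, List.map_append, List.map_map]
  congr 2
  ext i
  simp only [Function.comp_apply, Nat.cast_add]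
  ring_nf

lemma subwordAt_comp_add_left (a : ℤ → ℤ) (d c : ℤ) (t : ℕ) :
    subwordAt (fun x => a (d + x)) c t = subwordAt a (d + c) t := by
  simp only [subwordAt_eq, add_assoc]

lemma subwordAt_congr {a b : ℤ → ℤ} {c : ℤ} {t : ℕ} (h : ∀ x, c < x → x ≤ c + t → a x = b x) :
    subwordAt a c t = subwordAt b c t := by
  simp only [subwordAt_eq]
  refine List.map_congr_left fun i hi => h _ ?_ ?_
  all_goals
    have := List.mem_range.mp hi
    omega

lemma negRev_subwordAt (a : ℤ → ℤ) (c : ℤ) (t : ℕ) :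
    negRev (subwordAt a c t) = subwordAt (fun x => -a (2 * c + t + 1 - x)) c t := by
  apply List.ext_getElem
  · simp [negRev, subwordAt_length]
  · intro i h1 h2
    simp only [negRev, subwordAt_eq, List.length_map, List.length_range, List.getElem_reverse,
      List.getElem_map, List.getElem_range] at h2 ⊢
    congr 2
    omega

lemma subwordAt_infix (a : ℤ → ℤ) {c h : ℤ} {s t : ℕ} (hc : c ≤ h) (ht : h + t ≤ c + s) :
    subwordAt a h t <:+: subwordAt a c s := by
  obtain ⟨d, rfl⟩ : ∃ d : ℕ, h = c + d := ⟨(h - c).toNat, by omega⟩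
  obtain ⟨e, rfl⟩ : ∃ e : ℕ, s = d + t + e := ⟨s - d - t, by omega⟩
  rw [subwordAt_add, subwordAt_add]
  exact List.infix_append _ _ _

lemma cast_two_pow_sub_one (N : ℕ) : ((2 ^ N - 1 : ℕ) : ℤ) = 2 ^ N - 1 := by
  push_cast [Nat.cast_sub Nat.one_le_two_pow]
  ring

lemma subwordAt_two_pow_succ (a : ℤ → ℤ) (N : ℕ) :
    subwordAt a 0 (2 ^ (N + 1) - 1) =
      subwordAt a 0 (2 ^ N - 1) ++
        a (2 ^ N) :: subwordAt (fun x => a (2 ^ N + x)) 0 (2 ^ N - 1) := by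
  have hN : 2 ^ (N + 1) - 1 = (2 ^ N - 1) + (1 + (2 ^ N - 1)) := by
    have := Nat.one_le_two_pow (n := N)
    rw [pow_succ]
    omega
  rw [hN, subwordAt_add, subwordAt_add, subwordAt_comp_add_left, cast_two_pow_sub_one]
  simp [subwordAt_eq]

lemma exists_shift_of_infix_subwordAt {a f : ℤ → ℤ} {c e : ℤ} {s t : ℕ}
    (h : subwordAt a c t <:+: subwordAt f e s) :
    ∃ d, e ≤ c + d ∧ c + t + d ≤ e + s ∧ ∀ x, c < x → x ≤ c + t → a x = f (x + d) := by
  obtain ⟨u, v, huv⟩ := h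
  have hlen := congrArg List.length huv
  simp only [List.length_append, subwordAt_length] at hlen
  refine ⟨e + u.length - c, by omega, by omega, fun x hx0 hxt => ?_⟩
  obtain ⟨i, rfl⟩ : ∃ i : ℕ, x = c + 1 + i := ⟨(x - c - 1).toNat, by omega⟩
  have hi : (u ++ subwordAt a c t ++ v)[u.length + i]? = (subwordAt f e s)[u.length + i]? := by
    rw [huv]
  rw [List.append_assoc, List.getElem?_append_right (Nat.le_add_right _ _), Nat.add_sub_cancel_left,
    List.getElem?_append_left (by rw [subwordAt_length]; omega)] at hi
  simp only [subwordAt_eq, List.getElem?_map, List.getElem?_range (show i < t by omega),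
    List.getElem?_range (show u.length + i < s by omega), Option.map_some, Option.some.injEq] at hi
  rw [hi]
  congr 1
  push_cast
  ring

lemma lt_of_two_pow_mul_lt {m N : ℕ} {k : ℤ} (hk : 0 ≤ k) (h : 2 ^ m * (2 * k + 1) < 2 ^ N) :
    m < N := by
  have : (2 : ℤ) ^ m < 2 ^ N := by nlinarith [pow_pos (two_pos : (0 : ℤ) < 2) m]
  exact (pow_lt_pow_iff_right₀ (by norm_num)).mp this

lemma succ_lt_of_two_pow_mul_lt {m N : ℕ} {k : ℤ} (hk : 0 < k)
    (h : 2 ^ m * (2 * k + 1) < 2 ^ N) : m + 1 < N := by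
  refine (pow_lt_pow_iff_right₀ (a := (2 : ℤ)) (by norm_num)).mp ?_
  rw [pow_succ]
  nlinarith [pow_pos (two_pos : (0 : ℤ) < 2) m]

lemma two_pow_eq_of_lt {m N : ℕ} (h : m < N) : (2 : ℤ) ^ N = 2 ^ m * (2 * 2 ^ (N - m - 1)) := by
  rw [← pow_succ', ← pow_add]
  congr 1
  omega

lemma exists_eq_two_pow_mul_odd_of_pos {x : ℤ} (hx : 0 < x) :
    ∃ (m : ℕ) (k : ℤ), 0 ≤ k ∧ x = 2 ^ m * (2 * k + 1) := by
  lift x to ℕ using hx.le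
  obtain ⟨m, _, ⟨k, rfl⟩, rfl⟩ := Nat.exists_eq_two_pow_mul_odd (n := x) (by omega)
  exact ⟨m, k, by positivity, by push_cast; ring⟩

lemma two_pow_succ_dvd_sub_two_pow {l : ℕ} {x : ℤ} (h1 : 2 ^ l ∣ x) (h2 : ¬ 2 ^ (l + 1) ∣ x) :
    2 ^ (l + 1) ∣ x - 2 ^ l := by
  obtain ⟨w, rfl⟩ := h1
  obtain ⟨r, rfl⟩ : Odd w := by
    refine Int.not_even_iff_odd.mp fun ⟨r, hr⟩ => h2 ⟨r, ?_⟩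
    rw [hr, pow_succ]
    ring
  exact ⟨r, by ring⟩

/-- Positions are 1-indexed: entry `i` of the word `subwordAt f 0 (2 ^ N - 1)` is `f (i + 1)`. -/
def IsFoldingFun (N : ℕ) (f : ℤ → ℤ) : Prop :=
  ∀ (m : ℕ) (k : ℤ), 0 ≤ k → 2 ^ m * (2 * k + 1) < 2 ^ N →
    f (2 ^ m * (2 * k + 1)) = k.negOnePow * f (2 ^ m)

section

variable {N : ℕ} {f : ℤ → ℤ}

lemma IsFoldingFun.congr {g : ℤ → ℤ} (hf : IsFoldingFun N f)
    (hfg : ∀ x, 0 < x → f x = g x) : IsFoldingFun N g := by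
  intro m k hk hlt
  rw [← hfg _ (by positivity), ← hfg _ (by positivity), hf m k hk hlt]

lemma IsFoldingFun.shift (hf : IsFoldingFun (N + 1) f) :
    IsFoldingFun N (fun x => f (2 ^ N + x)) := by
  intro m k hk hlt
  have hQ := two_pow_eq_of_lt (lt_of_two_pow_mul_lt hk hlt)
  set P : ℤ := 2 ^ m
  set Q : ℤ := 2 ^ (N - m - 1)
  have hP : 0 < P := by positivity
  have e1 : 2 ^ N + P * (2 * k + 1) = P * (2 * (k + Q) + 1) := by rw [hQ]; ring
  have e2 : 2 ^ N + P = P * (2 * Q + 1) := by rw [hQ]; ring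
  change f (2 ^ N + P * (2 * k + 1)) = _ * f (2 ^ N + P)
  rw [e1, e2, hf m (k + Q) (by positivity) (by rw [← e1, pow_succ]; linarith),
    hf m Q (by positivity) (by rw [← e2, pow_succ]; nlinarith), Int.negOnePow_add]
  push_cast
  ring

lemma IsFoldingFun.eq_neg_reflect (hf : IsFoldingFun (N + 1) f) {x : ℤ} (hx0 : 0 < x)
    (hxN : x < 2 ^ N) : f x = -f (2 ^ (N + 1) - x) := by
  obtain ⟨m, k, hk, rfl⟩ := exists_eq_two_pow_mul_odd_of_pos hx0
  have hQ := two_pow_eq_of_lt (lt_of_two_pow_mul_lt hk hxN)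
  set P : ℤ := 2 ^ m
  set Q : ℤ := 2 ^ (N - m - 1)
  have hP : 0 < P := by positivity
  have hkQ : k < Q := by nlinarith
  have e : 2 ^ (N + 1) - P * (2 * k + 1) = P * (2 * (2 * Q - 1 - k) + 1) := by
    rw [pow_succ, hQ]; ring
  rw [e, hf m k hk (by rw [pow_succ]; linarith),
    hf m (2 * Q - 1 - k) (by linarith) (by rw [← e]; linarith)]
  simp only [Int.negOnePow_sub, Int.negOnePow_two_mul, Int.negOnePow_one]
  push_cast
  ring

/-- The right half determines `f` at the odd multiples of `2 ^ m` beyond `2 ^ N`, and the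
reflection carries these values to those below `2 ^ N`. -/
lemma isFoldingFun_succ (hs : IsFoldingFun N (fun x => f (2 ^ N + x)))
    (hr : ∀ x, 0 < x → x < 2 ^ N → f x = -f (2 ^ (N + 1) - x)) : IsFoldingFun (N + 1) f := by
  intro m k hk hlt
  obtain rfl | hk1 := hk.eq_or_lt
  · simp
  have hN : (2 : ℤ) ^ (N + 1) = 2 * 2 ^ N := by ring
  have hQ := two_pow_eq_of_lt (Nat.succ_lt_succ_iff.mp (succ_lt_of_two_pow_mul_lt hk1 hlt))
  set P : ℤ := 2 ^ m
  set Q : ℤ := 2 ^ (N - m - 1)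
  have hP : 0 < P := by positivity
  have hQ1 : 1 ≤ Q := one_le_pow₀ (by norm_num)
  set u := f (P * (2 * Q + 1))
  have hright : ∀ j, Q ≤ j → j < 2 * Q → f (P * (2 * j + 1)) = (j - Q).negOnePow * u := by
    intro j hj1 hj2
    have e1 : 2 ^ N + P * (2 * (j - Q) + 1) = P * (2 * j + 1) := by rw [hQ]; ring
    have e2 : 2 ^ N + P = P * (2 * Q + 1) := by rw [hQ]; ring
    have := hs m (j - Q) (by linarith) (by rw [hQ]; nlinarith)
    change f (2 ^ N + P * (2 * (j - Q) + 1)) = _ * f (2 ^ N + P) at this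
    rwa [e1, e2] at this
  have hu : f P = -(Q - 1).negOnePow * u := by
    have e : 2 ^ (N + 1) - P = P * (2 * (2 * Q - 1) + 1) := by rw [hN, hQ]; ring
    rw [hr P hP (by rw [hQ]; nlinarith), e, hright (2 * Q - 1) (by linarith) (by linarith)]
    simp only [Int.negOnePow_sub, Int.negOnePow_two_mul, Int.negOnePow_one]
    push_cast
    ring
  rw [hu]
  obtain hQk | hkQ := le_or_gt Q k
  · rw [hright k hQk (by rw [hN, hQ] at hlt; nlinarith), Int.negOnePow_sub, Int.negOnePow_sub,
      Int.negOnePow_one]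
    push_cast
    ring
  · have e : 2 ^ (N + 1) - P * (2 * k + 1) = P * (2 * (2 * Q - 1 - k) + 1) := by
      rw [hN, hQ]; ring
    rw [hr _ (by positivity) (by rw [hQ]; nlinarith), e, hright _ (by linarith) (by linarith)]
    simp only [Int.negOnePow_sub, Int.negOnePow_two_mul, Int.negOnePow_one]
    push_cast
    ring

lemma IsFoldingFun.add_two_pow_eq_neg (hf : IsFoldingFun N f) {n : ℕ} {x : ℤ}
    (hx : 2 ^ (n + 1) ∣ x - 2 ^ n) (hx0 : 0 < x) (hxN : x + 2 ^ (n + 1) < 2 ^ N) :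
    f (x + 2 ^ (n + 1)) = -f x := by
  obtain ⟨k, hk⟩ := hx
  obtain rfl : x = 2 ^ n * (2 * k + 1) := by linear_combination hk
  have hk0 : 0 ≤ k := by nlinarith [pow_pos (two_pos : (0 : ℤ) < 2) n]
  have : (0 : ℤ) < 2 ^ (n + 1) := by positivity
  have e : 2 ^ n * (2 * k + 1) + 2 ^ (n + 1) = 2 ^ n * (2 * (k + 1) + 1) := by ring
  rw [e, hf n (k + 1) (by linarith) (by rwa [← e]), hf n k hk0 (by linarith), Int.negOnePow_succ]
  push_cast
  ring

end

lemma isFold_of_isFoldingFun {N : ℕ} {f : ℤ → ℤ} (hpm : ∀ x, f x = 1 ∨ f x = -1)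
    (hf : IsFoldingFun N f) : IsFold N (subwordAt f 0 (2 ^ N - 1)) := by
  induction N generalizing f with
  | zero => exact IsFold.zero
  | succ N ih =>
    have hleft : subwordAt f 0 (2 ^ N - 1) =
        negRev (subwordAt (fun x => f (2 ^ N + x)) 0 (2 ^ N - 1)) := by
      rw [negRev_subwordAt, cast_two_pow_sub_one]
      refine subwordAt_congr fun x hx0 hxN => ?_
      rw [cast_two_pow_sub_one] at hxN
      rw [hf.eq_neg_reflect hx0 (by linarith)]
      ring_nf
    rw [subwordAt_two_pow_succ, hleft]
    exact IsFold.succ N _ _ (ih (fun x => hpm _) hf.shift) (hpm _)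

lemma exists_isFoldingFun_of_isFold {N : ℕ} {S : List ℤ} (hS : IsFold N S) :
    ∃ f, IsFoldingFun N f ∧ S = subwordAt f 0 (2 ^ N - 1) := by
  induction hS with
  | zero =>
    refine ⟨0, fun m k hk hlt => ?_, rfl⟩
    nlinarith [one_le_pow₀ (M₀ := ℤ) (a := 2) (n := m) (by norm_num)]
  | succ N S ε _ _ ih =>
    obtain ⟨f, hf, rfl⟩ := ih
    set g : ℤ → ℤ := fun x =>
      if 2 ^ N < x then f (x - 2 ^ N) else if x = 2 ^ N then ε else -f (2 ^ N - x)
    have hshift : ∀ x, 0 < x → g (2 ^ N + x) = f x := by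
      intro x hx
      simp [g, hx]
    have hrefl : ∀ x, 0 < x → x < 2 ^ N → g x = -g (2 ^ (N + 1) - x) := by
      intro x hx0 hxN
      have hN : (2 : ℤ) ^ (N + 1) = 2 * 2 ^ N := by ring
      simp only [g, hN]
      rw [if_neg (by linarith), if_neg (by linarith), if_pos (by linarith)]
      ring_nf
    refine ⟨g, isFoldingFun_succ (hf.congr fun x hx => (hshift x hx).symm) hrefl, ?_⟩
    rw [subwordAt_two_pow_succ, negRev_subwordAt, cast_two_pow_sub_one]
    congr 1
    · refine subwordAt_congr fun x hx0 hxN => ?_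
      rw [cast_two_pow_sub_one] at hxN
      simp only [g]
      rw [if_neg (by linarith), if_neg (by linarith)]
      ring_nf
    · congr 1
      · simp [g]
      · exact subwordAt_congr fun x hx _ => (hshift x hx).symm

section

variable {a : ℤ → ℤ}

lemma altProp_iff {n : ℕ} {y : ℤ} :
    AltProp a n y ↔ ∀ k : ℤ, a (y + k * 2 ^ (n + 1)) = k.negOnePow * a y := by
  refine forall_congr' fun k => ?_
  rcases Int.even_or_odd k with hk | hk
  · simp [hk, Int.negOnePow_even]
  · simp [Int.not_even_iff_odd.mpr hk, Int.negOnePow_odd _ hk]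

lemma AltProp.of_dvd_sub {n : ℕ} {y z : ℤ} (h : AltProp a n y)
    (hyz : 2 ^ (n + 1) ∣ z - y) : AltProp a n z := by
  obtain ⟨j, hj⟩ := hyz
  obtain rfl : z = y + j * 2 ^ (n + 1) := by linear_combination hj
  rw [altProp_iff] at h ⊢
  intro k
  rw [add_assoc, ← add_mul, h, h, Int.negOnePow_add]
  push_cast
  ring

/-- At `z + 2 ^ (m + 1)` the level-`l` alternation predicts `a z`, the level-`m` one `-a z`. -/
lemma not_dvd_sub_of_altProp (hpm : PM a) {l m : ℕ} {y z : ℤ} (hlm : l < m)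
    (hy : AltProp a l y) (hz : AltProp a m z) : ¬ 2 ^ (l + 1) ∣ z - y := by
  intro hyz
  have hzl := altProp_iff.mp (hy.of_dvd_sub hyz) (2 * 2 ^ (m - l - 1))
  have hzm := altProp_iff.mp hz 1
  have e : 2 * 2 ^ (m - l - 1) * 2 ^ (l + 1) = (1 : ℤ) * 2 ^ (m + 1) := by
    rw [← pow_succ', ← pow_add, one_mul]
    congr 1
    omega
  rw [e, hzm, Int.negOnePow_two_mul, Int.negOnePow_one] at hzl
  push_cast at hzl
  rcases hpm z with h | h <;> omega

lemma two_pow_succ_dvd_sub_sub (hpm : PM a) {H : ℕ → ℤ} (hH : ∀ m, AltProp a m (H m))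
    {l m : ℕ} (hlm : l < m) : 2 ^ (l + 1) ∣ H m - H l - 2 ^ l := by
  induction l generalizing m with
  | zero =>
    simpa using
      two_pow_succ_dvd_sub_two_pow (by simp) (not_dvd_sub_of_altProp hpm hlm (hH 0) (hH m))
  | succ l ih =>
    refine two_pow_succ_dvd_sub_two_pow ?_ (not_dvd_sub_of_altProp hpm hlm (hH _) (hH m))
    have h := dvd_sub (ih (m := m) (by omega)) (ih (m := l + 1) (by omega))
    rwa [sub_sub_sub_cancel_right, sub_sub_sub_cancel_right] at h

/-- `c + 2 ^ N` is aligned with `H N` modulo `2 ^ (N + 1)`, and then the congruences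
`H N ≡ H m + 2 ^ m [ZMOD 2 ^ (m + 1)]` align `c + 2 ^ m` with every lower `H m`. -/
lemma exists_window_start (hpm : PM a) {H : ℕ → ℤ} (hH : ∀ m, AltProp a m (H m))
    (h : ℤ) (N : ℕ) : ∃ c, c ≤ h ∧ h < c + 2 ^ (N + 1) ∧ ∀ m ≤ N, AltProp a m (c + 2 ^ m) := by
  set b := H N - 2 ^ N
  set q := (h - b) / 2 ^ (N + 1)
  have hpos : (0 : ℤ) < 2 ^ (N + 1) := by positivity
  have hq := Int.emod_add_mul_ediv (h - b) (2 ^ (N + 1))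
  have hr0 := Int.emod_nonneg (h - b) hpos.ne'
  have hr1 := Int.emod_lt_of_pos (h - b) hpos
  refine ⟨b + 2 ^ (N + 1) * q, by linarith, by linarith, fun m hmN => (hH m).of_dvd_sub ?_⟩
  obtain rfl | hmN := hmN.eq_or_lt
  · exact ⟨q, by ring⟩
  · obtain ⟨u, hu⟩ := two_pow_succ_dvd_sub_sub hpm hH hmN
    have e1 : (2 : ℤ) ^ N = 2 ^ (m + 1) * 2 ^ (N - m - 1) := by rw [← pow_add]; congr 1; omega
    have e2 : (2 : ℤ) ^ (N + 1) = 2 ^ (m + 1) * 2 ^ (N - m) := by rw [← pow_add]; congr 1; omega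
    exact ⟨u + 1 - 2 ^ (N - m - 1) + 2 ^ (N - m) * q, by
      simp only [b]; linear_combination hu - e1 + q * e2⟩

lemma isFoldingFun_of_altProp {N : ℕ} {c : ℤ}
    (hc : ∀ m, m + 1 < N → AltProp a m (c + 2 ^ m)) : IsFoldingFun N (fun x => a (c + x)) := by
  intro m k hk hlt
  obtain rfl | hk1 := hk.eq_or_lt
  · simp
  have hmN := succ_lt_of_two_pow_mul_lt hk1 hlt
  show a (c + 2 ^ m * (2 * k + 1)) = _ * a (c + 2 ^ m)
  rw [show c + 2 ^ m * (2 * k + 1) = c + 2 ^ m + k * 2 ^ (m + 1) by ring]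
  exact altProp_iff.mp (hc m hmN) k

theorem isFiniteFold_of_altProp (hpm : PM a) (hA : ∀ n : ℕ, ∃ y, AltProp a n y)
    {T : List ℤ} (hT : IsSubword a T) : IsFiniteFold T := by
  choose H hH using hA
  obtain ⟨h, hT⟩ := hT
  set t := T.length
  obtain ⟨c, hch, hhc, hc⟩ := exists_window_start hpm hH h t
  refine ⟨t + 2, _, isFold_of_isFoldingFun (fun x => hpm _)
    (isFoldingFun_of_altProp (c := c) fun m hm => hc m (by omega)), ?_⟩
  rw [hT, subwordAt_comp_add_left, add_zero]
  refine subwordAt_infix a hch ?_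
  have ht : (t : ℤ) < 2 ^ (t + 1) := by
    exact_mod_cast (Nat.lt_succ_self t).trans Nat.lt_two_pow_self
  rw [cast_two_pow_sub_one, pow_succ _ (t + 1)]
  linarith

lemma exists_residue_of_isFiniteFold
    (hF : ∀ T : List ℤ, IsSubword a T → IsFiniteFold T) (n L : ℕ) :
    ∃ r : ZMod (2 ^ (n + 1)), ∀ x : ℤ, |x| ≤ L → (x : ZMod (2 ^ (n + 1))) = r →
      a (x + 2 ^ (n + 1)) = -a x := by
  obtain ⟨N, S, hS, hTS⟩ := hF (subwordAt a (-(L + 1)) (2 * L + 1 + 2 ^ (n + 1)))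
    ⟨_, by rw [subwordAt_length]⟩
  obtain ⟨f, hf, rfl⟩ := exists_isFoldingFun_of_isFold hS
  obtain ⟨d, hd0, hd1, had⟩ := exists_shift_of_infix_subwordAt hTS
  rw [cast_two_pow_sub_one] at hd1
  push_cast at hd1 had
  refine ⟨((2 ^ n - d : ℤ) : ZMod (2 ^ (n + 1))), fun x hx hxr => ?_⟩
  obtain ⟨hx1, hx2⟩ := abs_le.mp hx
  have : (0 : ℤ) < 2 ^ (n + 1) := by positivity
  have hdvd : 2 ^ (n + 1) ∣ x + d - 2 ^ n := by
    rw [ZMod.intCast_eq_intCast_iff_dvd_sub] at hxr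
    push_cast at hxr
    rw [show x + d - 2 ^ n = -(2 ^ n - d - x) by ring, dvd_neg]
    exact hxr
  rw [had x (by linarith) (by linarith), had _ (by linarith) (by linarith), add_right_comm,
    hf.add_two_pow_eq_neg hdvd (by linarith) (by linarith)]

lemma altProp_of_succ_eq_neg {n : ℕ} {y : ℤ}
    (h : ∀ k : ℤ, a (y + (k + 1) * 2 ^ (n + 1)) = -a (y + k * 2 ^ (n + 1))) : AltProp a n y := by
  rw [altProp_iff]
  intro k
  induction k using Int.induction_on with
  | zero => simp
  | succ i ih =>
    rw [h, ih, Int.negOnePow_succ]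
    push_cast
    ring
  | pred i ih =>
    have := h (-i - 1)
    rw [sub_add_cancel, ih] at this
    rw [Int.negOnePow_sub, Int.negOnePow_one]
    push_cast
    linarith

/-- A residue class that works for infinitely many `L` works everywhere. -/
lemma exists_altProp_of_isFiniteFold
    (hF : ∀ T : List ℤ, IsSubword a T → IsFiniteFold T) (n : ℕ) : ∃ y, AltProp a n y := by
  choose r hr using exists_residue_of_isFiniteFold hF n
  obtain ⟨r₀, hr₀⟩ := Finite.exists_infinite_fiber r
  obtain ⟨y, rfl⟩ := ZMod.intCast_surjective r₀
  refine ⟨y, altProp_of_succ_eq_neg fun k => ?_⟩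
  obtain ⟨L, hL, hxL⟩ := (Set.infinite_coe_iff.mp hr₀).exists_gt (y + k * 2 ^ (n + 1)).natAbs
  rw [add_one_mul, ← add_assoc]
  refine hr L _ ?_ ?_
  · rw [Int.abs_eq_natAbs]
    exact_mod_cast hxL.le
  · have h0 : (2 : ZMod (2 ^ (n + 1))) ^ (n + 1) = 0 := by
      exact_mod_cast ZMod.natCast_self (2 ^ (n + 1))
    rw [show r L = _ from hL]
    push_cast
    simp [h0]

end

theorem statement4 (a : ℤ → ℤ) (hpm : PM a) :
    (∀ T : List ℤ, IsSubword a T → IsFiniteFold T) ↔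
      ∀ n : ℕ, ∃ hn : ℤ, AltProp a n hn :=
  ⟨fun hF n => exists_altProp_of_isFiniteFold hF n,
    fun hA _ hT => isFiniteFold_of_altProp hpm hA hT⟩
end

section
/- Let (a_h)_{h∈ℤ} be a bi-infinite {+1,-1}-sequence such that for each n ∈ ℕ there exists h_n ∈ ℤ with a_{h_n + k·2^{n+1}} = (-1)^k a_{h_n} for all k ∈ ℤ. Let E_n = h_n + 2^n ℤ and F_n = h_n + 2^{n+1} ℤ. Then for every n, the complement ℤ − E_n equals the set of h ∈ ℤ such that a_{h + k·2^{n+1}} = a_h for all k ∈ ℤ, and ℤ − E_n is the disjoint union of F_0, F_1, ..., F_{n-1}. -/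
lemma aux_antiperiod (a : ℤ → ℤ) (h : ℕ → ℤ) (halt : ∀ n : ℕ, AltProp a n (h n))
    (m : ℕ) (x : ℤ) (hx : (2 ^ (m + 1) : ℤ) ∣ (x - h m)) :
    ∀ k : ℤ, a (x + k * 2 ^ (m + 1)) = if Even k then a x else -a x := by
  obtain ⟨j, hj⟩ := hx
  have hxe : x = h m + j * 2 ^ (m + 1) := by linear_combination hj
  intro k
  have h1 := halt m (j + k)
  have h2 := halt m j
  have he : x + k * 2 ^ (m + 1) = h m + (j + k) * 2 ^ (m + 1) := by rw [hxe]; ring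
  have hax : a x = if Even j then a (h m) else -a (h m) := by rw [hxe]; exact h2
  rw [he, h1, hax]
  by_cases hk : Even k <;> by_cases hj2 : Even j <;>
    simp [Int.even_add, hk, hj2]

lemma aux_Ki (a : ℤ → ℤ) (h : ℕ → ℤ) (hpm : PM a) (halt : ∀ n : ℕ, AltProp a n (h n))
    (m n : ℕ) (hmn : m < n) : ¬ ((2 : ℤ) ^ (m + 1) ∣ (h n - h m)) := by
  intro hd
  have hap := aux_antiperiod a h halt m (h n) hd (2 ^ (n - m))
  have heven : Even ((2 : ℤ) ^ (n - m)) := by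
    rw [Int.even_pow]; exact ⟨even_two, by omega⟩
  have hpow : n - m + (m + 1) = n + 1 := by omega
  rw [if_pos heven, ← pow_add, hpow] at hap
  have h1 := halt n 1
  rw [one_mul, if_neg (by decide : ¬ Even (1 : ℤ))] at h1
  rcases hpm (h n) with hv | hv <;> omega

lemma aux_K (a : ℤ → ℤ) (h : ℕ → ℤ) (hpm : PM a) (halt : ∀ n : ℕ, AltProp a n (h n)) :
    ∀ m n : ℕ, m < n → ∃ c : ℤ, Odd c ∧ h n - h m = c * 2 ^ m := by
  intro m
  induction m with
  | zero =>
    intro n hn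
    refine ⟨h n - h 0, ?_, by ring⟩
    rcases Int.even_or_odd (h n - h 0) with ⟨e, he⟩ | ho
    · exact absurd ⟨e, by rw [he]; ring⟩ (aux_Ki a h hpm halt 0 n hn)
    · exact ho
  | succ m ih =>
    intro n hn
    obtain ⟨c1, hc1o, hc1⟩ := ih n (by omega)
    obtain ⟨c2, hc2o, hc2⟩ := ih (m + 1) (by omega)
    obtain ⟨e1, he1⟩ := hc1o
    obtain ⟨e2, he2⟩ := hc2o
    have hval : h n - h (m + 1) = (e1 - e2) * 2 ^ (m + 1) := by
      rw [he1] at hc1; rw [he2] at hc2; linear_combination hc1 - hc2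
    refine ⟨e1 - e2, ?_, hval⟩
    rcases Int.even_or_odd (e1 - e2) with ⟨e, he⟩ | ho
    · exact absurd ⟨e, by rw [hval, he]; ring⟩ (aux_Ki a h hpm halt (m + 1) n (by omega))
    · exact ho

lemma aux_cover (a : ℤ → ℤ) (h : ℕ → ℤ) (hpm : PM a) (halt : ∀ n : ℕ, AltProp a n (h n)) :
    ∀ n : ℕ, ∀ x : ℤ, ¬ ((2 : ℤ) ^ n ∣ (x - h n)) →
      ∃ m, m < n ∧ (2 : ℤ) ^ (m + 1) ∣ (x - h m) := by
  intro n
  induction n with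
  | zero => intro x hx; exact absurd (by simp) hx
  | succ n ih =>
    intro x hx
    by_cases h1 : (2 : ℤ) ^ n ∣ x - h n
    · by_cases h2 : (2 : ℤ) ^ (n + 1) ∣ x - h n
      · exact ⟨n, by omega, h2⟩
      · exfalso
        apply hx
        obtain ⟨c2, hc2o, hc2⟩ := aux_K a h hpm halt n (n + 1) (by omega)
        obtain ⟨c1, hc1⟩ := h1
        obtain ⟨e2, he2⟩ := hc2o
        rcases Int.even_or_odd c1 with ⟨e, he⟩ | ⟨e1, he1⟩
        · exact absurd ⟨e, by rw [hc1, he]; ring⟩ h2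
        · exact ⟨e1 - e2, by rw [he1] at hc1; rw [he2] at hc2; linear_combination hc1 - hc2⟩
    · obtain ⟨m, hm, hdvd⟩ := ih x h1
      exact ⟨m, by omega, hdvd⟩

lemma aux_disj (a : ℤ → ℤ) (h : ℕ → ℤ) (hpm : PM a) (halt : ∀ n : ℕ, AltProp a n (h n))
    (m m' : ℕ) (hmm : m < m') :
    Disjoint {x : ℤ | (2 ^ (m + 1) : ℤ) ∣ (x - h m)}
      {x : ℤ | (2 ^ (m' + 1) : ℤ) ∣ (x - h m')} := by
  rw [Set.disjoint_left]
  intro x hd1 hd2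
  simp only [Set.mem_setOf_eq] at hd1 hd2
  have hd3 : (2 : ℤ) ^ (m + 1) ∣ (x - h m') :=
    dvd_trans (pow_dvd_pow 2 (by omega)) hd2
  have hd4 : (2 : ℤ) ^ (m + 1) ∣ (h m' - h m) := by
    have := dvd_sub hd1 hd3
    have he : (x - h m) - (x - h m') = h m' - h m := by ring
    rwa [he] at this
  exact aux_Ki a h hpm halt m m' hmm hd4

theorem statement5 (a : ℤ → ℤ) (hpm : PM a) (h : ℕ → ℤ)
    (halt : ∀ n : ℕ, AltProp a n (h n)) (n : ℕ) :
    ({x : ℤ | ¬ (2 ^ n : ℤ) ∣ (x - h n)} =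
        {x : ℤ | ∀ k : ℤ, a (x + k * 2 ^ (n + 1)) = a x}) ∧
    ({x : ℤ | ¬ (2 ^ n : ℤ) ∣ (x - h n)} =
        ⋃ m ∈ Finset.range n, {x : ℤ | (2 ^ (m + 1) : ℤ) ∣ (x - h m)}) ∧
    ((Finset.range n : Set ℕ).Pairwise fun m m' =>
        Disjoint {x : ℤ | (2 ^ (m + 1) : ℤ) ∣ (x - h m)}
          {x : ℤ | (2 ^ (m' + 1) : ℤ) ∣ (x - h m')}) := by
  have KK := aux_K a h hpm halt
  have cover := aux_cover a h hpm halt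
  refine ⟨?_, ?_, ?_⟩
  · ext x
    simp only [Set.mem_setOf_eq]
    constructor
    · intro hx k
      obtain ⟨m, hm, hd⟩ := cover n x hx
      have hap := aux_antiperiod a h halt m x hd (k * 2 ^ (n - m))
      have heven : Even (k * (2 : ℤ) ^ (n - m)) :=
        (Int.even_pow.mpr ⟨even_two, by omega⟩).mul_left k
      have hpow : n - m + (m + 1) = n + 1 := by omega
      rw [if_pos heven, mul_assoc, ← pow_add, hpow] at hap
      exact hap
    · intro hx hdvd
      by_cases hF : (2 : ℤ) ^ (n + 1) ∣ x - h n
      · obtain ⟨j, hj⟩ := hF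
        have e0 := hx (-j)
        have e1 := hx (1 - j)
        rw [show x + (-j) * 2 ^ (n + 1) = h n from by linear_combination hj] at e0
        rw [show x + (1 - j) * 2 ^ (n + 1) = h n + 1 * 2 ^ (n + 1) from by
          linear_combination hj] at e1
        have hh := halt n 1
        rw [if_neg (by decide : ¬ Even (1 : ℤ))] at hh
        rcases hpm x with hv | hv <;> omega
      · obtain ⟨c2, hc2o, hc2⟩ := KK n (n + 1) (by omega)
        obtain ⟨c1, hc1⟩ := hdvd
        obtain ⟨e2, he2⟩ := hc2o
        rcases Int.even_or_odd c1 with ⟨e, he⟩ | ⟨e1, he1⟩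
        · exact hF ⟨e, by rw [hc1, he]; ring⟩
        · rw [he1] at hc1
          rw [he2] at hc2
          have hj : x = h (n + 1) + (e1 - e2) * 2 ^ (n + 1) := by
            linear_combination hc1 - hc2
          have e0 := hx (-(e1 - e2))
          have e1' := hx (2 - (e1 - e2))
          rw [show x + (-(e1 - e2)) * 2 ^ (n + 1) = h (n + 1) from by
            linear_combination hj] at e0
          rw [show x + (2 - (e1 - e2)) * 2 ^ (n + 1) = h (n + 1) + 1 * 2 ^ (n + 1 + 1) from by
            linear_combination hj] at e1'
          have hh := halt (n + 1) 1
          rw [if_neg (by decide : ¬ Even (1 : ℤ))] at hh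
          rcases hpm x with hv | hv <;> omega
  · ext x
    simp only [Set.mem_setOf_eq, Set.mem_iUnion, Finset.mem_range, exists_prop]
    constructor
    · intro hx
      exact cover n x hx
    · rintro ⟨m, hm, hd⟩ hdvd
      have hd3 : (2 : ℤ) ^ (m + 1) ∣ (x - h n) :=
        dvd_trans (pow_dvd_pow 2 (by omega)) hdvd
      have hd4 : (2 : ℤ) ^ (m + 1) ∣ (h n - h m) := by
        have := dvd_sub hd hd3
        have he : (x - h m) - (x - h n) = h n - h m := by ring
        rwa [he] at this
      exact aux_Ki a h hpm halt m n hm hd4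
  · intro m hm m' hm' hne
    rcases Nat.lt_or_ge m m' with hlt | hge
    · exact aux_disj a h hpm halt m m' hlt
    · exact (aux_disj a h hpm halt m' m (by omega)).symm
end

section
/- No complete folding sequence is periodic: if (a_h)_{h∈ℤ} is a complete folding sequence and r ∈ ℤ satisfies a_{h+r} = a_h for all h ∈ ℤ, then r = 0. -/
/-! Write `|r| = 2ⁿ·k` with `k` odd. Then `k·2ⁿ⁺¹ = 2|r|` is a period of `a`, while the
alternation property at level `n` gives a point `h` with `a (h + k·2ⁿ⁺¹) = -a h` since `k` is odd.
As `a h = ±1 ≠ 0`, this is impossible. -/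

open Function

theorem AltProp.apply_add_odd_mul {a : ℤ → ℤ} {n : ℕ} {h : ℤ} (hA : AltProp a n h) {k : ℤ}
    (hk : Odd k) : a (h + k * 2 ^ (n + 1)) = -a h := by
  rw [hA k, if_neg (Int.not_even_iff_odd.mpr hk)]

theorem Function.Periodic.natAbs {α : Type*} {f : ℤ → α} {r : ℤ} (hf : Periodic f r) :
    Periodic f r.natAbs := by
  rw [Int.natCast_natAbs]
  rcases abs_choice r with h | h <;> rw [h]
  exacts [hf, hf.neg]

theorem not_periodic_of_forall_altProp {a : ℤ → ℤ} (hpm : PM a)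
    (halt : ∀ n : ℕ, ∃ h : ℤ, AltProp a n h) {r : ℕ} (hr : r ≠ 0) : ¬ Periodic a r := by
  intro hper
  obtain ⟨n, k, hk, rfl⟩ := Nat.exists_eq_two_pow_mul_odd hr
  obtain ⟨h, hA⟩ := halt n
  have hshift : a (h + k * 2 ^ (n + 1)) = a h := by
    have hk2 : (k : ℤ) * 2 ^ (n + 1) = (2 : ℕ) * ((2 ^ n * k : ℕ) : ℤ) := by push_cast; ring
    rw [hk2]
    exact hper.nat_mul 2 h
  rw [hA.apply_add_odd_mul (by exact_mod_cast hk)] at hshift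
  rcases hpm h with h1 | h1 <;> omega

theorem statement8 (a : ℤ → ℤ) (ha : CompleteFold a) (r : ℤ)
    (hper : ∀ h : ℤ, a (h + r) = a h) : r = 0 := by
  by_contra hr
  exact not_periodic_of_forall_altProp ha.1 ha.2 (Int.natAbs_ne_zero.mpr hr)
    (Periodic.natAbs hper)
end

section
/- Let S = (a_h)_{h∈ℤ} be a complete folding sequence, and let n ∈ ℕ, t = max(2^n, 7). If r, s ∈ ℤ satisfy (a_{r+1},...,a_{r+t}) = (a_{s+1},...,a_{s+t}), then r − s is divisible by 2^{n+1}. -/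
lemma altEval {a : ℤ → ℤ} {m : ℕ} {hm : ℤ} (H : AltProp a m hm) {x k : ℤ}
    (hx : x = hm + k * 2 ^ (m + 1)) : a x = if Even k then a hm else - a hm := by
  rw [hx]; exact H k

lemma altFlip {a : ℤ → ℤ} {m : ℕ} {hm : ℤ} (H : AltProp a m hm) {x y k : ℤ}
    (hx : x = hm + k * 2 ^ (m + 1)) (hy : y = x + 2 ^ (m + 1)) : a y = - a x := by
  have hy' : y = hm + (k + 1) * 2 ^ (m + 1) := by rw [hy, hx]; ring
  rw [altEval H hx, altEval H hy']
  by_cases h : Even k <;> simp [h, Int.even_add_one]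

lemma altParity {a : ℤ → ℤ} {m : ℕ} {hm : ℤ} (hPM : PM a) (H : AltProp a m hm)
    {x y k l : ℤ} (hx : x = hm + k * 2 ^ (m + 1)) (hy : y = hm + l * 2 ^ (m + 1))
    (he : a x = a y) : Even (k - l) := by
  rw [altEval H hx, altEval H hy] at he
  rcases hPM hm with h | h <;>
    by_cases hk : Even k <;> by_cases hl : Even l <;>
      simp [hk, hl, h] at he ⊢ <;> exact (Int.even_sub).2 (by tauto)

lemma subword_get (a : ℤ → ℤ) (h : ℤ) (t : ℕ) (i : ℕ) (hit : i < t) :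
    (subwordAt a h t)[i]? = some (a (h + 1 + (i : ℤ))) := by
  simp only [subwordAt, List.bind_eq_flatMap, List.pure_def, ← List.map_eq_flatMap,
    List.getElem?_map, List.getElem?_range, hit, Option.map_some]

lemma subword_window {a : ℤ → ℤ} {r s : ℤ} {t : ℕ}
    (heq : subwordAt a r t = subwordAt a s t) :
    ∀ x : ℤ, r + 1 ≤ x → x < r + 1 + t → a x = a (x + (s - r)) := by
  intro x hx1 hx2
  obtain ⟨i, hi⟩ : ∃ i : ℕ, (i : ℤ) = x - (r + 1) := ⟨(x - (r + 1)).toNat, by omega⟩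
  have hit : i < t := by omega
  have e1 := subword_get a r t i hit
  have e2 := subword_get a s t i hit
  rw [heq, e2] at e1
  have e' : a (s + 1 + (i : ℤ)) = a (r + 1 + (i : ℤ)) := Option.some.inj e1
  have k1 : r + 1 + (i : ℤ) = x := by omega
  have k2 : s + 1 + (i : ℤ) = x + (s - r) := by omega
  rw [k1, k2] at e'
  exact e'.symm

lemma h01 {a : ℤ → ℤ} {h0 h1 : ℤ} (hPM : PM a) (H0 : AltProp a 0 h0)
    (H1 : AltProp a 1 h1) : ¬ (2 : ℤ) ∣ (h1 - h0) := by
  rintro ⟨j, hj⟩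
  have e1 : a (h1 + 4) = - a h1 :=
    altFlip H1 (k := 0) (by norm_num) (by norm_num)
  have e2 : a h1 = if Even j then a h0 else - a h0 :=
    altEval H0 (x := h1) (k := j) (by norm_num; omega)
  have e3 : a (h1 + 4) = if Even (j + 2) then a h0 else - a h0 :=
    altEval H0 (x := h1 + 4) (k := j + 2) (by norm_num; omega)
  have hev : Even (j + 2) ↔ Even j := by
    simp only [Int.even_iff]; omega
  rcases hPM h0 with h | h <;> rcases hPM h1 with h' | h' <;>
    by_cases hj2 : Even j <;>
      simp [h, h', hj2, hev] at e1 e2 e3 <;> omega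

lemma flip2 {a : ℤ → ℤ} {h0 : ℤ} (H0 : AltProp a 0 h0) {x y : ℤ}
    (hx : (2 : ℤ) ∣ x - h0) (hy : y = x + 2) : a y = - a x := by
  obtain ⟨c, hc⟩ := hx
  exact altFlip H0 (k := c) (by norm_num; omega) (by rw [hy]; norm_num)

lemma flip4 {a : ℤ → ℤ} {h1 : ℤ} (H1 : AltProp a 1 h1) {x y : ℤ}
    (hx : (4 : ℤ) ∣ x - h1) (hy : y = x + 4) : a y = - a x := by
  obtain ⟨c, hc⟩ := hx
  exact altFlip H1 (k := c) (by norm_num; omega) (by rw [hy]; norm_num)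

lemma fourAlt {a : ℤ → ℤ} {h0 h1 : ℤ} (hPM : PM a) (H0 : AltProp a 0 h0)
    (H1 : AltProp a 1 h1) (y : ℤ) (hy : ¬ (2 : ℤ) ∣ (y - h0))
    (e1 : a (y + 2) = - a y) (e2 : a (y + 4) = - a (y + 2))
    (e3 : a (y + 6) = - a (y + 4)) : False := by
  have hne := h01 hPM H0 H1
  have h4 : (4 : ℤ) ∣ (y - h1) ∨ (4 : ℤ) ∣ (y + 2 - h1) := by omega
  rcases h4 with h4 | h4
  · have f : a (y + 4) = - a y := flip4 H1 h4 (by ring)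
    rcases hPM y with h | h <;> omega
  · have f : a (y + 6) = - a (y + 2) := flip4 H1 h4 (by ring)
    rcases hPM (y + 2) with h | h <;> omega

lemma baseLemma {a : ℤ → ℤ} {h0 h1 : ℤ} (hPM : PM a) (H0 : AltProp a 0 h0)
    (H1 : AltProp a 1 h1) {r s : ℤ} {t : ℕ} (ht : 7 ≤ t)
    (hw : ∀ x : ℤ, r + 1 ≤ x → x < r + 1 + t → a x = a (x + (s - r))) :
    (2 : ℤ) ∣ r - s := by
  by_contra hodd
  have ht' : (7 : ℤ) ≤ (t : ℤ) := by exact_mod_cast ht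
  have w : ∀ x : ℤ, r + 1 ≤ x → x ≤ r + 7 → a x = a (x + (s - r)) :=
    fun x u v => hw x u (by omega)
  have g1 := w (r + 1) (by omega) (by omega)
  have g3 := w (r + 3) (by omega) (by omega)
  have g5 := w (r + 5) (by omega) (by omega)
  have g7 := w (r + 7) (by omega) (by omega)
  rw [show r + 1 + (s - r) = s + 1 by ring] at g1
  rw [show r + 3 + (s - r) = s + 3 by ring] at g3
  rw [show r + 5 + (s - r) = s + 5 by ring] at g5
  rw [show r + 7 + (s - r) = s + 7 by ring] at g7
  by_cases hc : (2 : ℤ) ∣ (r + 1 - h0)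
  · have f1 : a (r + 3) = - a (r + 1) := flip2 H0 (by omega) (by ring)
    have f2 : a (r + 5) = - a (r + 3) := flip2 H0 (by omega) (by ring)
    have f3 : a (r + 7) = - a (r + 5) := flip2 H0 (by omega) (by ring)
    apply fourAlt hPM H0 H1 (s + 1) (by omega)
    · rw [show s + 1 + 2 = s + 3 by ring, ← g3, f1, g1]
    · rw [show s + 1 + 4 = s + 5 by ring, show s + 1 + 2 = s + 3 by ring, ← g5, f2, g3]
    · rw [show s + 1 + 6 = s + 7 by ring, show s + 1 + 4 = s + 5 by ring, ← g7, f3, g5]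
  · have hcs : (2 : ℤ) ∣ (s + 1 - h0) := by omega
    have f1 : a (s + 3) = - a (s + 1) := flip2 H0 (by omega) (by ring)
    have f2 : a (s + 5) = - a (s + 3) := flip2 H0 (by omega) (by ring)
    have f3 : a (s + 7) = - a (s + 5) := flip2 H0 (by omega) (by ring)
    apply fourAlt hPM H0 H1 (r + 1) (by omega)
    · rw [show r + 1 + 2 = r + 3 by ring, g3, f1, ← g1]
    · rw [show r + 1 + 4 = r + 5 by ring, show r + 1 + 2 = r + 3 by ring, g5, f2, ← g3]
    · rw [show r + 1 + 6 = r + 7 by ring, show r + 1 + 4 = r + 5 by ring, g7, f3, ← g5]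

lemma stepLemma {a : ℤ → ℤ} (hPM : PM a) {m : ℕ} {hm : ℤ} (H : AltProp a m hm)
    {r s : ℤ} {t : ℕ} (ht : 2 ^ (m + 1) ≤ t)
    (hw : ∀ x : ℤ, r + 1 ≤ x → x < r + 1 + t → a x = a (x + (s - r)))
    (hdvd : (2 ^ (m + 1) : ℤ) ∣ r - s) : (2 ^ (m + 1 + 1) : ℤ) ∣ r - s := by
  obtain ⟨c, hc⟩ := hdvd
  have hP : (0 : ℤ) < 2 ^ (m + 1) := by positivity
  have htZ : (2 ^ (m + 1) : ℤ) ≤ (t : ℤ) := by exact_mod_cast ht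
  set P : ℤ := 2 ^ (m + 1) with hPdef
  set q : ℤ := (r + P - hm) / P with hq
  have hdm := Int.mul_ediv_add_emod (r + P - hm) P
  have hr1 : 0 ≤ (r + P - hm) % P := Int.emod_nonneg _ hP.ne'
  have hr2 : (r + P - hm) % P < P := Int.emod_lt_of_pos _ hP
  have hx : hm + q * P = r + P - (r + P - hm) % P := by
    have hcm : q * P = P * q := mul_comm _ _
    linarith [hdm]
  have hx1 : r + 1 ≤ hm + q * P := Int.add_one_le_iff.mpr (by linarith)
  have hx2 : hm + q * P < r + 1 + t := by linarith
  have he := hw (hm + q * P) hx1 hx2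
  have hpar : Even (q - (q - c)) := by
    refine altParity hPM H (x := hm + q * P) (y := hm + q * P + (s - r))
      (k := q) (l := q - c) rfl ?_ he
    linear_combination - hc
  have hec : Even c := by simpa using hpar
  obtain ⟨d, hd⟩ := hec
  exact ⟨d, by rw [hc, hd, hPdef]; ring⟩

theorem statement9 (a : ℤ → ℤ) (ha : CompleteFold a) (n : ℕ) (r s : ℤ)
    (heq : subwordAt a r (max (2 ^ n) 7) = subwordAt a s (max (2 ^ n) 7)) :
    (2 ^ (n + 1) : ℤ) ∣ (r - s) := by
  obtain ⟨hPM, hAlt⟩ := ha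
  obtain ⟨h0, H0⟩ := hAlt 0
  obtain ⟨h1, H1⟩ := hAlt 1
  have hw := subword_window heq
  have hbase : (2 : ℤ) ∣ r - s := baseLemma hPM H0 H1 (le_max_right _ _) hw
  have main : ∀ m : ℕ, m ≤ n → (2 ^ (m + 1) : ℤ) ∣ r - s := by
    intro m
    induction m with
    | zero => intro _; simpa using hbase
    | succ k ih =>
      intro hk
      obtain ⟨hm, Hm⟩ := hAlt k
      have htk : 2 ^ (k + 1) ≤ max (2 ^ n) 7 :=
        le_trans (Nat.pow_le_pow_right (by norm_num) hk) (le_max_left _ _)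
      exact stepLemma hPM Hm htk hw (ih (by omega))
  exact main n le_rfl
end

section
/- No complete folding sequence S = (a_h)_{h∈ℤ} is locally isomorphic to its pointwise negation −S = (-a_h)_{h∈ℤ}; in fact S and −S have no common subword that is a 4-folding sequence. -/
def W4 (e1 e2 e3 e4 : ℤ) : List ℤ :=
  [-e1,-e2,e1,-e3,-e1,e2,e1,e4,-e1,-e2,e1,e3,-e1,e2,e1]

lemma alt_eq' {a : ℤ → ℤ} {n : ℕ} {hn : ℤ} (H : AltProp a n hn) {P x y : ℤ}
    (hP : P = 2 ^ (n + 1)) (hx : P ∣ x - hn) (hy : P ∣ y - hn)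
    (hxy : 2 * P ∣ x - y) : a x = a y := by
  obtain ⟨m, hm⟩ := hx
  obtain ⟨m', hm'⟩ := hy
  have hx' : x = hn + m * 2 ^ (n + 1) := by rw [← hP]; linarith
  have hy' : y = hn + m' * 2 ^ (n + 1) := by rw [← hP]; linarith
  have hPne : P ≠ 0 := by rw [hP]; positivity
  have hd : (2 : ℤ) ∣ m - m' := by
    have h2 : P * (2 : ℤ) ∣ P * (m - m') := by
      have hxy' : P * 2 ∣ x - y := by rwa [mul_comm]
      have he : x - y = P * (m - m') := by linarith
      rwa [he] at hxy'
    exact (mul_dvd_mul_iff_left hPne).mp h2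
  have hev : Even (m - m') := by obtain ⟨c, hc⟩ := hd; exact ⟨c, by omega⟩
  have hiff : Even m ↔ Even m' := Int.even_sub.mp hev
  rw [hx', hy', H m, H m']
  by_cases hm2 : Even m'
  · rw [if_pos hm2, if_pos (hiff.mpr hm2)]
  · rw [if_neg hm2, if_neg (fun c => hm2 (hiff.mp c))]

lemma alt_neg' {a : ℤ → ℤ} {n : ℕ} {hn : ℤ} (H : AltProp a n hn) {P x y : ℤ}
    (hP : P = 2 ^ (n + 1)) (hx : P ∣ x - hn) (hy : P ∣ y - hn)
    (hxy : 2 * P ∣ x - y - P) : a x = -a y := by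
  obtain ⟨m, hm⟩ := hx
  obtain ⟨m', hm'⟩ := hy
  have hx' : x = hn + m * 2 ^ (n + 1) := by rw [← hP]; linarith
  have hy' : y = hn + m' * 2 ^ (n + 1) := by rw [← hP]; linarith
  have hPne : P ≠ 0 := by rw [hP]; positivity
  have hd : (2 : ℤ) ∣ m - m' - 1 := by
    have h2 : P * (2 : ℤ) ∣ P * (m - m' - 1) := by
      have hxy' : P * 2 ∣ x - y - P := by rwa [mul_comm]
      have he : x - y - P = P * (m - m' - 1) := by linarith
      rwa [he] at hxy'
    exact (mul_dvd_mul_iff_left hPne).mp h2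
  have hodd : ¬ Even (m - m') := by
    obtain ⟨c, hc⟩ := hd
    rintro ⟨d, hd2⟩
    omega
  rw [hx', hy', H m, H m']
  by_cases hm2 : Even m'
  · rw [if_pos hm2, if_neg (fun c => hodd (Int.even_sub.mpr (iff_of_true c hm2)))]
  · rw [if_neg hm2, neg_neg, if_pos ?_]
    by_contra c
    exact hodd (Int.even_sub.mpr (iff_of_false c hm2))

lemma altNeg {a : ℤ → ℤ} {n : ℕ} {hn : ℤ} (H : AltProp a n hn) :
    AltProp (fun x => -a x) n hn := by
  intro k
  simp only
  rw [H k]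
  split_ifs <;> ring

lemma sep {a : ℤ → ℤ} (hPM : PM a) {n m : ℕ} {hn hm : ℤ} (hlt : n < m)
    (Hn : AltProp a n hn) (Hm : AltProp a m hm) : ¬ ((2:ℤ) ^ (n+1) ∣ hm - hn) := by
  intro hd
  have h1 : a (hm + 2 ^ (m+1)) = -a hm := by
    have := Hm 1
    rw [if_neg (by norm_num [Int.even_iff])] at this
    simpa using this
  have h2 : a (hm + 2 ^ (m+1)) = a hm := by
    refine alt_eq' (x := hm + 2 ^ (m+1)) (y := hm) Hn rfl ?_ hd ?_
    · have : (hm + 2 ^ (m+1) - hn) = (hm - hn) + 2 ^ (m+1) := by ring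
      rw [this]
      exact dvd_add hd (pow_dvd_pow 2 (by omega))
    · have : hm + 2 ^ (m+1) - hm = 2 ^ (m+1) := by ring
      rw [this, ← pow_succ']
      exact pow_dvd_pow 2 (by omega)
  have := hPM hm
  omega

lemma fold4_exists {T : List ℤ} (h : IsFold 4 T) :
    ∃ e1 e2 e3 e4 : ℤ, (e1 = 1 ∨ e1 = -1) ∧ (e2 = 1 ∨ e2 = -1) ∧ (e3 = 1 ∨ e3 = -1) ∧
      (e4 = 1 ∨ e4 = -1) ∧ T = W4 e1 e2 e3 e4 := by
  obtain _ | ⟨_, S3, e4, h3, he4⟩ := h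
  obtain _ | ⟨_, S2, e3, h2, he3⟩ := h3
  obtain _ | ⟨_, S1, e2, h1, he2⟩ := h2
  obtain _ | ⟨_, S0, e1, h0, he1⟩ := h1
  cases h0
  exact ⟨e1, e2, e3, e4, he1, he2, he3, he4, by simp [W4, negRev]⟩

lemma occ_align {a : ℤ → ℤ} (hPM : PM a) {h0 h1 h e1 e2 e3 e4 : ℤ}
    (H0 : AltProp a 0 h0) (H1 : AltProp a 1 h1) (h10 : ¬ (2:ℤ) ∣ h1 - h0)
    (he2 : e2 = 1 ∨ e2 = -1) (he3 : e3 = 1 ∨ e3 = -1)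
    (hw : W4 e1 e2 e3 e4 = subwordAt a h 15) :
    (4:ℤ) ∣ h + 2 - h1 ∧ a (h + 1) = -e1 := by
  rw [show (15:ℕ) = 14+1 from rfl] at hw
  simp [subwordAt, W4, List.range_succ] at hw
  obtain ⟨E1,E2,E3,E4,E5,E6,E7,E8,E9,E10,E11,E12,E13,E14,E15⟩ := hw
  by_cases hpar : (2:ℤ) ∣ h + 1 - h0
  · have h12 : (2:ℤ) ∣ h + 2 - h1 := by omega
    by_cases hc : (4:ℤ) ∣ h + 2 - h1
    · exact ⟨hc, E1.symm⟩
    · exfalso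
      have hc4 : (4:ℤ) ∣ h + 4 - h1 := by omega
      have hq : a (h+1+11) = a (h+1+3) :=
        alt_eq' (P := 4) H1 (by norm_num) (by omega) (by omega) ⟨1, by ring⟩
      rw [← E12, ← E4] at hq
      rcases he3 with hv | hv <;> omega
  · exfalso
    have hq : a (h+1+5) = a (h+1+1) :=
      alt_eq' (P := 2) H0 (by norm_num) (by omega) (by omega) ⟨1, by ring⟩
    rw [← E6, ← E2] at hq
    rcases he2 with hv | hv <;> omega

theorem statement13 (a : ℤ → ℤ) (ha : CompleteFold a) :
    (∀ T : List ℤ, IsFold 4 T →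
        ¬ (IsSubword a T ∧ IsSubword (fun h => -a h) T)) ∧
    ¬ (∀ T : List ℤ, IsSubword a T ↔ IsSubword (fun h => -a h) T) := by
  obtain ⟨hPM, hAlt⟩ := ha
  obtain ⟨h0, H0⟩ := hAlt 0
  obtain ⟨h1, H1⟩ := hAlt 1
  obtain ⟨h2, H2⟩ := hAlt 2
  obtain ⟨h3, H3⟩ := hAlt 3
  have hPMb : PM (fun x => -a x) := fun x => by have := hPM x; simp only; omega
  have d10 : ¬ (2:ℤ) ∣ h1 - h0 := by simpa using sep hPM (by norm_num) H0 H1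
  have d20 : ¬ (2:ℤ) ∣ h2 - h0 := by simpa using sep hPM (by norm_num) H0 H2
  have d30 : ¬ (2:ℤ) ∣ h3 - h0 := by simpa using sep hPM (by norm_num) H0 H3
  have d21 : ¬ (4:ℤ) ∣ h2 - h1 := by
    have := sep hPM (show 1 < 2 by norm_num) H1 H2; norm_num at this; exact this
  have d31 : ¬ (4:ℤ) ∣ h3 - h1 := by
    have := sep hPM (show 1 < 3 by norm_num) H1 H3; norm_num at this; exact this
  have d32 : ¬ (8:ℤ) ∣ h3 - h2 := by
    have := sep hPM (show 2 < 3 by norm_num) H2 H3; norm_num at this; exact this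
  have part1 : ∀ T : List ℤ, IsFold 4 T →
      ¬ (IsSubword a T ∧ IsSubword (fun h => -a h) T) := by
    rintro T hT ⟨⟨p, hp⟩, ⟨q, hq⟩⟩
    obtain ⟨e1, e2, e3, e4, he1, he2, he3, he4, rfl⟩ := fold4_exists hT
    have hlen : (W4 e1 e2 e3 e4).length = 15 := rfl
    rw [hlen] at hp hq
    obtain ⟨hA1, hA2⟩ := occ_align hPM H0 H1 d10 he2 he3 hp
    obtain ⟨hB1, hB2⟩ := occ_align hPMb (altNeg H0) (altNeg H1) d10 he2 he3 hq
    have hB2' : -a (q + 1) = -e1 := hB2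
    have hp0 : (2:ℤ) ∣ p + 1 - h0 := by omega
    have heq : a (q+1) = a (p+1) :=
      alt_eq' (P := 2) H0 (by norm_num) (by omega) (by omega)
        (by rw [show (2:ℤ) * 2 = 4 from by norm_num]; omega)
    rcases he1 with hv | hv <;> omega
  refine ⟨part1, fun hiff => ?_⟩
  set hh : ℤ := h3 + 8 with hhh
  have c0 : (2:ℤ) ∣ hh + 1 - h0 := by omega
  have c1 : (4:ℤ) ∣ hh + 2 - h1 := by omega
  have c2 : (8:ℤ) ∣ hh + 4 - h2 := by omega
  have A2  : a (hh+1+2)  = -a (hh+1) :=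
    alt_neg' (P := 2) H0 (by norm_num) (by omega) (by omega) ⟨0, by ring⟩
  have A4  : a (hh+1+4)  =  a (hh+1) :=
    alt_eq' (P := 2) H0 (by norm_num) (by omega) (by omega) ⟨1, by ring⟩
  have A6  : a (hh+1+6)  = -a (hh+1) :=
    alt_neg' (P := 2) H0 (by norm_num) (by omega) (by omega) ⟨1, by ring⟩
  have A8  : a (hh+1+8)  =  a (hh+1) :=
    alt_eq' (P := 2) H0 (by norm_num) (by omega) (by omega) ⟨2, by ring⟩
  have A10 : a (hh+1+10) = -a (hh+1) :=
    alt_neg' (P := 2) H0 (by norm_num) (by omega) (by omega) ⟨2, by ring⟩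
  have A12 : a (hh+1+12) =  a (hh+1) :=
    alt_eq' (P := 2) H0 (by norm_num) (by omega) (by omega) ⟨3, by ring⟩
  have A14 : a (hh+1+14) = -a (hh+1) :=
    alt_neg' (P := 2) H0 (by norm_num) (by omega) (by omega) ⟨3, by ring⟩
  have B5  : a (hh+1+5)  = -a (hh+1+1) :=
    alt_neg' (P := 4) H1 (by norm_num) (by omega) (by omega) ⟨0, by ring⟩
  have B9  : a (hh+1+9)  =  a (hh+1+1) :=
    alt_eq' (P := 4) H1 (by norm_num) (by omega) (by omega) ⟨1, by ring⟩
  have B13 : a (hh+1+13) = -a (hh+1+1) :=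
    alt_neg' (P := 4) H1 (by norm_num) (by omega) (by omega) ⟨1, by ring⟩
  have C11 : a (hh+1+11) = -a (hh+1+3) :=
    alt_neg' (P := 8) H2 (by norm_num) (by omega) (by omega) ⟨0, by ring⟩
  set T0 : List ℤ := W4 (-a (hh+1)) (-a (hh+1+1)) (-a (hh+1+3)) (a (hh+1+7)) with hT0
  have he1 : -a (hh+1) = 1 ∨ -a (hh+1) = -1 := by have := hPM (hh+1); omega
  have he2 : -a (hh+1+1) = 1 ∨ -a (hh+1+1) = -1 := by have := hPM (hh+1+1); omega
  have he3 : -a (hh+1+3) = 1 ∨ -a (hh+1+3) = -1 := by have := hPM (hh+1+3); omega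
  have he4 : a (hh+1+7) = 1 ∨ a (hh+1+7) = -1 := hPM (hh+1+7)
  have f1 : IsFold 1 [-a (hh+1)] := by
    simpa [negRev] using IsFold.succ 0 [] (-a (hh+1)) IsFold.zero he1
  have f2 : IsFold 2 [-(-a (hh+1)), -a (hh+1+1), -a (hh+1)] := by
    simpa [negRev] using IsFold.succ 1 _ (-a (hh+1+1)) f1 he2
  have f3 : IsFold 3 [-(-a (hh+1)), -(-a (hh+1+1)), -a (hh+1), -a (hh+1+3),
      -(-a (hh+1)), -a (hh+1+1), -a (hh+1)] := by
    simpa [negRev] using IsFold.succ 2 _ (-a (hh+1+3)) f2 he3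
  have f4 : IsFold 4 T0 := by
    have := IsFold.succ 3 _ (a (hh+1+7)) f3 he4
    simp only [negRev] at this ⊢
    rw [hT0]
    simpa [W4, negRev] using this
  have hsubA : IsSubword a T0 := by
    refine ⟨hh, ?_⟩
    have hl : T0.length = 15 := rfl
    rw [hl]
    rw [show (15:ℕ) = 14+1 from rfl]
    simp [subwordAt, hT0, W4, List.range_succ, A2, A4, A6, A8, A10, A12, A14, B5, B9, B13, C11]
  have hsubB : IsSubword (fun h => -a h) T0 := (hiff T0).mp hsubA
  exact part1 T0 f4 ⟨hsubA, hsubB⟩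
end

section
/- There exist 2^ℵ₀ (continuum many) complete folding sequences that are pairwise not locally isomorphic, i.e., an injection from the Cantor set (or from {0,1}^ℕ) into the set of local-isomorphism classes of complete folding sequences. -/
lemma Int.exists_eq_two_pow_mul_odd {g : ℤ} (hg : g ≠ 0) :
    ∃ (j : ℕ) (m : ℤ), g = 2 ^ j * (2 * m + 1) := by
  have hmax := padicValInt_dvd_iff (p := 2) (padicValInt 2 g + 1) g
  obtain ⟨q, hq⟩ := padicValInt_dvd (p := 2) g
  generalize padicValInt 2 g = v at hmax hq
  subst hq
  have hq_odd : ¬ 2 ∣ q := by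
    rintro ⟨r, rfl⟩
    have := hmax.1 ⟨r, by push_cast; ring⟩
    omega
  exact ⟨v, q / 2, by push_cast; congr 1; omega⟩

lemma padicValInt_two_pow_mul_odd (j : ℕ) (m : ℤ) : padicValInt 2 (2 ^ j * (2 * m + 1)) = j := by
  have hodd : ¬ ((2 : ℕ) : ℤ) ∣ 2 * m + 1 := by push_cast; omega
  rw [padicValInt.mul (by positivity) (by omega), padicValInt.eq_zero_of_not_dvd hodd]
  simp [padicValInt]

lemma Int.two_pow_mul_odd_ediv_two_pow_succ (j : ℕ) (m : ℤ) :
    2 ^ j * (2 * m + 1) / 2 ^ (j + 1) = m := by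
  have hpos : (0 : ℤ) < 2 ^ j := by positivity
  rw [show (2 : ℤ) ^ j * (2 * m + 1) = 2 ^ j + 2 ^ (j + 1) * m by ring,
    Int.add_mul_ediv_left _ _ (by positivity),
    Int.ediv_eq_zero_of_lt hpos.le (by rw [pow_succ]; omega), zero_add]

lemma subwordAt_eq_map (a : ℤ → ℤ) (h : ℤ) (t : ℕ) :
    subwordAt a h t = (List.range t).map fun i : ℕ => a (h + 1 + i) := by
  simp [subwordAt, List.map_eq_flatMap, List.flatMap_assoc]

lemma isSubword_subwordAt (a : ℤ → ℤ) (h : ℤ) (t : ℕ) : IsSubword a (subwordAt a h t) :=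
  ⟨h, by simp [subwordAt_eq_map]⟩

lemma exists_shift_of_isSubword {a b : ℤ → ℤ} {L : ℕ} (h : IsSubword b (subwordAt a (-1) L)) :
    ∃ t, ∀ i : ℤ, 0 ≤ i → i < L → b (i + t) = a i := by
  obtain ⟨g, hg⟩ := h
  refine ⟨g + 1, fun i h0 hL => ?_⟩
  lift i to ℕ using h0
  have := congrArg (·[i]?) hg
  simp only [subwordAt_eq_map, neg_add_cancel, zero_add, List.length_map, List.length_range,
    show i < L by omega, getElem?_pos, List.getElem_map, List.getElem_range, Option.some.injEq] at this
  rw [this, add_comm]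

lemma PM.ne_neg {a : ℤ → ℤ} (ha : PM a) (h : ℤ) : a h ≠ -a h := by
  rcases ha h with e | e <;> rw [e] <;> norm_num

lemma AltProp.shift {a : ℤ → ℤ} {n : ℕ} {h : ℤ} (ha : AltProp a n h) (m : ℤ) :
    AltProp a n (h + m * 2 ^ (n + 1)) := by
  intro k
  rw [add_assoc, ← add_mul, ha, ha m]
  by_cases hm : Even m <;> by_cases hk : Even k <;> simp [hm, hk, Int.even_add]

section TwoPowFolds

variable {a b : ℤ → ℤ}

lemma altProp_two_pow_mul_odd {j : ℕ} (ha : AltProp a j (2 ^ j)) (m : ℤ) :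
    AltProp a j (2 ^ j * (2 * m + 1)) := by
  rw [show (2 : ℤ) ^ j * (2 * m + 1) = 2 ^ j + m * 2 ^ (j + 1) by ring]
  exact ha.shift m

/- One of `g`, `g + 2 ^ (N + 1)` has `2`-adic valuation exactly `N + 1`, and there `a` changes
sign after `2 ^ (N + 2)` steps. -/
lemma not_two_pow_succ_dvd_of_periodic (hpm : PM a) (halt : ∀ j, AltProp a j (2 ^ j))
    {N : ℕ} {g : ℤ} (hper : ∀ k : ℤ, 0 ≤ k → k ≤ 1 →
      a (g + (k + 2) * 2 ^ (N + 1)) = a (g + k * 2 ^ (N + 1))) :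
    ¬ 2 ^ (N + 1) ∣ g := by
  rintro ⟨u, rfl⟩
  obtain ⟨k, w, hk0, hk1, hw⟩ : ∃ k w : ℤ, 0 ≤ k ∧ k ≤ 1 ∧ u + k = 2 * w + 1 := by
    obtain ⟨w, hw | hw⟩ := Int.even_or_odd' u
    exacts [⟨1, w, by omega⟩, ⟨0, w, by omega⟩]
  have hanti := altProp_two_pow_mul_odd (halt (N + 1)) w 1
  rw [if_neg Int.not_even_one] at hanti
  have hk := hper k hk0 hk1
  rw [show 2 ^ (N + 1) * u + (k + 2) * 2 ^ (N + 1) = 2 ^ (N + 1) * (2 * w + 1) + 1 * 2 ^ (N + 1 + 1)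
      by linear_combination 2 ^ (N + 1) * hw,
    show 2 ^ (N + 1) * u + k * 2 ^ (N + 1) = 2 ^ (N + 1) * (2 * w + 1)
      by linear_combination 2 ^ (N + 1) * hw, hanti] at hk
  exact hpm.ne_neg _ hk.symm

lemma eq_two_pow_mul_odd_of_alternating (hpm : PM a) (halt : ∀ j, AltProp a j (2 ^ j))
    {N : ℕ} {g : ℤ}
    (hg : ∀ k : ℤ, 0 ≤ k → k ≤ 3 → a (g + k * 2 ^ (N + 1)) = if Even k then a g else -a g) :
    ∃ m : ℤ, g = 2 ^ N * (2 * m + 1) := by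
  have hdvd : ¬ 2 ^ (N + 1) ∣ g := not_two_pow_succ_dvd_of_periodic hpm halt fun k hk0 hk1 => by
    rw [hg (k + 2) (by omega) (by omega), hg k hk0 (by omega)]
    simp
  obtain ⟨j, m, rfl⟩ := Int.exists_eq_two_pow_mul_odd (g := g) (by
    rintro rfl; exact hdvd (dvd_zero _))
  obtain hjN | rfl | hNj := lt_trichotomy j N
  · have hper := altProp_two_pow_mul_odd (halt j) m (2 ^ (N - j))
    rw [if_pos ((Int.even_pow' (by omega)).2 even_two), ← pow_add,
      show N - j + (j + 1) = N + 1 by omega] at hper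
    have hanti := hg 1 zero_le_one (by norm_num)
    rw [if_neg Int.not_even_one, one_mul, hper] at hanti
    exact absurd hanti (hpm.ne_neg _)
  · exact ⟨m, rfl⟩
  · exact absurd ((pow_dvd_pow 2 hNj).mul_right _) hdvd

theorem apply_two_pow_eq_of_isSubword (ha : ∀ j, AltProp a j (2 ^ j)) (hpm : PM b)
    (hb : ∀ j, AltProp b j (2 ^ j)) (hsub : ∀ T, IsSubword a T → IsSubword b T) (n : ℕ) :
    b (2 ^ n) = a (2 ^ n) := by
  obtain ⟨t, ht⟩ := exists_shift_of_isSubword (hsub _ (isSubword_subwordAt a (-1) (2 ^ (n + 4))))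
  have hpos : (0 : ℤ) < 2 ^ n := by positivity
  have hwin : ∀ k : ℤ, 0 ≤ k → k ≤ 3 →
      b (2 ^ (n + 1) + t + k * 2 ^ (n + 2)) = a (2 ^ (n + 1) + k * 2 ^ (n + 2)) := by
    intro k hk0 hk3
    rw [add_right_comm]
    refine ht _ (by positivity) ?_
    push_cast
    nlinarith [show (2 : ℤ) ^ (n + 4) = 16 * 2 ^ n by ring, show (2 : ℤ) ^ (n + 2) = 4 * 2 ^ n by ring,
      show (2 : ℤ) ^ (n + 1) = 2 * 2 ^ n by ring]
  obtain ⟨m, hm⟩ := eq_two_pow_mul_odd_of_alternating hpm hb (N := n + 1) (g := 2 ^ (n + 1) + t)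
    fun k hk0 hk3 => by
      have h0 := hwin 0 le_rfl (by norm_num)
      rw [zero_mul, add_zero, add_zero] at h0
      rw [hwin k hk0 hk3, h0]
      exact ha (n + 1) k
  have ht_eq : t = 2 * m * 2 ^ (n + 1) := by linear_combination hm
  calc b (2 ^ n) = b (2 ^ n + 2 * m * 2 ^ (n + 1)) := by
        rw [hb n (2 * m), if_pos (even_two_mul m)]
    _ = a (2 ^ n) := by
      rw [← ht_eq]
      refine ht _ hpos.le ?_
      push_cast
      nlinarith [show (2 : ℤ) ^ (n + 4) = 16 * 2 ^ n by ring]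

end TwoPowFolds

def boolSign (b : Bool) : ℤˣ := if b then 1 else -1

lemma boolSign_injective : Function.Injective boolSign := by decide

/-- The generalized paperfolding sequence with folding instructions `x`: its value at
`2 ^ j * (2 * m + 1)` is `boolSign (x j) * (-1) ^ m`. -/
def paperfold (x : ℕ → Bool) (h : ℤ) : ℤ :=
  if h = 0 then 1
  else ↑(boolSign (x (padicValInt 2 h)) * (h / 2 ^ (padicValInt 2 h + 1)).negOnePow)

lemma paperfold_two_pow_mul_odd (x : ℕ → Bool) (j : ℕ) (m : ℤ) :
    paperfold x (2 ^ j * (2 * m + 1)) = ↑(boolSign (x j) * m.negOnePow) := by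
  rw [paperfold, if_neg (mul_ne_zero (by positivity) (by omega)), padicValInt_two_pow_mul_odd,
    Int.two_pow_mul_odd_ediv_two_pow_succ]

lemma paperfold_two_pow (x : ℕ → Bool) (j : ℕ) : paperfold x (2 ^ j) = boolSign (x j) := by
  simpa using paperfold_two_pow_mul_odd x j 0

lemma pm_paperfold (x : ℕ → Bool) : PM (paperfold x) := fun h => by
  unfold paperfold
  split_ifs
  · exact Or.inl rfl
  · exact Int.isUnit_iff.1 (Units.isUnit _)

lemma altProp_paperfold (x : ℕ → Bool) (j : ℕ) : AltProp (paperfold x) j (2 ^ j) := fun k => by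
  rw [show (2 : ℤ) ^ j + k * 2 ^ (j + 1) = 2 ^ j * (2 * k + 1) by ring, paperfold_two_pow_mul_odd,
    paperfold_two_pow]
  by_cases hk : Even k
  · simp [hk, Int.negOnePow_even]
  · simp [hk, Int.negOnePow_odd _ (Int.not_even_iff_odd.1 hk)]

theorem statement15 :
    ∃ f : (ℕ → Bool) → (ℤ → ℤ),
      (∀ x, CompleteFold (f x)) ∧
      ∀ x y, (∀ T : List ℤ, IsSubword (f x) T ↔ IsSubword (f y) T) → x = y := by
  refine ⟨paperfold, fun x => ⟨pm_paperfold x, fun n => ⟨2 ^ n, altProp_paperfold x n⟩⟩,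
    fun x y hxy => funext fun n => ?_⟩
  have h := apply_two_pow_eq_of_isSubword (altProp_paperfold x) (pm_paperfold y)
    (altProp_paperfold y) (fun T => (hxy T).1) n
  rw [paperfold_two_pow, paperfold_two_pow] at h
  exact (boolSign_injective (Units.val_injective h)).symm
end

section
/- For every complete folding sequence S, each n ≥ 3, the number of distinct subwords of S that are n-folding sequences is exactly 8. -/
/-!
Fix witnesses `g j` of the alternation property, so that the terms of `a` at the positions
`g j + 2 ^ (j + 1) * k` (level `j`) alternate in sign. The levels are nested:
`g j' ≡ g j + 2 ^ j [ZMOD 2 ^ (j + 1)]` for `j < j'`, so every position lies in exactly one level,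
apart from at most one position lying in all classes `g j + 2 ^ j + 2 ^ (j + 1) ℤ`.

An `n`-folding word is a `±1` word of length `2 ^ n - 1` whose letters at consecutive odd
multiples of each `2 ^ p` are opposite. Three such sign changes with step `2 ^ (m + 1)` force a
position into level `m`; hence for `n = m + 3` a subword of `a` is `n`-folding exactly when it
starts at `g (m + 1) + s * 2 ^ (m + 1)` for some `s` and shows one more sign change with step
`2 ^ (m + 2)`. Such a word is determined by its letters at the positions `2 ^ m`, `2 ^ (m + 1)`
and `2 ^ (m + 2)`, since the letters of lower levels do not depend on `s`. Finally each of the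
`8` sign patterns occurs: the terms of levels `≥ k` form a self-similar tower (`IsFoldTower`) in
which every short pattern compatible with the alternation can be found at either parity.
-/

namespace Folding

/-- The letters of a word are counted from `1`, so that position `2 ^ p * (2 * u + 1)` belongs to
the `p`-th fold. -/
def letter (L : List ℤ) (q : ℕ) : ℤ := L.getD (q - 1) 0

def FoldRule (L : List ℤ) : Prop :=
  ∀ p u : ℕ, 2 ^ p * (2 * u + 3) ≤ L.length →
    letter L (2 ^ p * (2 * u + 3)) = -letter L (2 ^ p * (2 * u + 1))

theorem letter_mem {L : List ℤ} {q : ℕ} (h1 : 0 < q) (h2 : q ≤ L.length) :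
    letter L q ∈ L := by
  rw [letter, List.getD_eq_getElem _ _ (by omega)]
  exact List.getElem_mem _

theorem letter_drop (L : List ℤ) (k : ℕ) {r : ℕ} (hr : 0 < r) :
    letter (L.drop k) r = letter L (k + r) := by
  simp only [letter, List.getD_eq_getElem?_getD, List.getElem?_drop]
  congr 3
  omega

theorem ext_letter {L L' : List ℤ} (hlen : L.length = L'.length)
    (h : ∀ q, 0 < q → q ≤ L.length → letter L q = letter L' q) : L = L' := by
  refine List.ext_getElem hlen fun i h1 h2 => ?_
  have := h (i + 1) (by omega) (by omega)
  rwa [letter, letter, Nat.add_sub_cancel, List.getD_eq_getElem _ _ h1,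
    List.getD_eq_getElem _ _ h2] at this

theorem lt_of_two_pow_mul_lt {p u N : ℕ} (h : 2 ^ p * (2 * u + 3) < 2 ^ (N + 1)) : p < N := by
  by_contra hp
  have h1 : 2 ^ N ≤ 2 ^ p := Nat.pow_le_pow_right (by norm_num) (by omega)
  have h2 : 2 ^ p * 3 ≤ 2 ^ p * (2 * u + 3) := Nat.mul_le_mul_left _ (by omega)
  rw [pow_succ] at h
  omega

theorem exists_two_pow_eq {p N : ℕ} (h : p < N) : ∃ E, 2 ^ N = 2 ^ p * (2 * E) := by
  refine ⟨2 ^ (N - p - 1), ?_⟩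
  rw [← pow_succ', ← pow_add]
  congr 1
  omega

section Unfold

variable (S : List ℤ) (ε : ℤ)

theorem length_negRev : (negRev S).length = S.length := by simp [negRev]

theorem mem_negRev {x : ℤ} : x ∈ negRev S ↔ -x ∈ S := by
  simp only [negRev, List.mem_reverse, List.mem_map]
  constructor
  · rintro ⟨y, hy, rfl⟩
    simpa using hy
  · exact fun hx => ⟨-x, hx, neg_neg x⟩

theorem length_negRev_append : (negRev S ++ ε :: S).length = 2 * S.length + 1 := by
  simp [length_negRev]
  omega

theorem letter_negRev_append_of_le {q : ℕ} (h1 : 0 < q) (h2 : q ≤ S.length) :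
    letter (negRev S ++ ε :: S) q = -letter S (S.length + 1 - q) := by
  have hq : q - 1 < (negRev S).length := by rw [length_negRev]; omega
  rw [letter, letter, List.getD_append _ _ _ _ hq, List.getD_eq_getElem _ _ hq,
    List.getD_eq_getElem _ _ (by omega)]
  simp only [negRev, List.getElem_reverse, List.getElem_map, List.length_map]
  congr 2
  omega

theorem letter_negRev_append_mid : letter (negRev S ++ ε :: S) (S.length + 1) = ε := by
  rw [letter, List.getD_append_right _ _ _ _ (by rw [length_negRev]; omega), length_negRev]
  simp

theorem letter_negRev_append_add {r : ℕ} (hr : 0 < r) :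
    letter (negRev S ++ ε :: S) (S.length + 1 + r) = letter S r := by
  rw [← letter_drop _ _ hr]
  congr 1
  simp [← length_negRev S]

end Unfold

theorem FoldRule.negRev_append {N : ℕ} {S : List ℤ} (hS : S.length + 1 = 2 ^ N)
    (h : FoldRule S) (ε : ℤ) : FoldRule (negRev S ++ ε :: S) := by
  intro p u hb
  rw [length_negRev_append] at hb
  have hp1 : 1 ≤ 2 ^ p := Nat.one_le_two_pow
  obtain ⟨E, hE⟩ := exists_two_pow_eq (lt_of_two_pow_mul_lt (p := p) (u := u) (N := N)
    (by rw [pow_succ]; omega))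
  rcases (by omega : E ≤ u ∨ u + 1 = E ∨ u + 2 ≤ E) with hu | rfl | hu
  · obtain ⟨v, rfl⟩ := Nat.exists_eq_add_of_le hu
    have e1 : 2 ^ p * (2 * (E + v) + 1) = S.length + 1 + 2 ^ p * (2 * v + 1) := by
      rw [hS, hE]; ring
    have e3 : 2 ^ p * (2 * (E + v) + 3) = S.length + 1 + 2 ^ p * (2 * v + 3) := by
      rw [hS, hE]; ring
    rw [e1, e3, letter_negRev_append_add _ _ (by positivity),
      letter_negRev_append_add _ _ (by positivity)]
    exact h p v (by omega)
  · have e1 : 2 ^ p * (2 * u + 1) + 2 ^ p = S.length + 1 := by rw [hS, hE]; ring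
    have e3 : 2 ^ p * (2 * u + 3) = S.length + 1 + 2 ^ p := by rw [hS, hE]; ring
    rw [e3, letter_negRev_append_add _ _ hp1, letter_negRev_append_of_le _ _ (by positivity)
      (by omega), show S.length + 1 - 2 ^ p * (2 * u + 1) = 2 ^ p by omega, neg_neg]
  · obtain ⟨v, rfl⟩ := Nat.exists_eq_add_of_le hu
    have hsum : 2 ^ N = 2 ^ p * (2 * u + 1) + 2 ^ p * (2 * v + 3) := by rw [hE]; ring
    have hu3 : 2 ^ p * (2 * u + 3) = 2 ^ p * (2 * u + 1) + 2 * 2 ^ p := by ring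
    have hv3 : 2 ^ p * (2 * v + 3) = 2 ^ p * (2 * v + 1) + 2 * 2 ^ p := by ring
    have hu1 : 0 < 2 ^ p * (2 * u + 1) := by positivity
    have hv1 : 0 < 2 ^ p * (2 * v + 1) := by positivity
    rw [letter_negRev_append_of_le _ _ (by omega) (by omega),
      letter_negRev_append_of_le _ _ hu1 (by omega),
      show S.length + 1 - 2 ^ p * (2 * u + 1) = 2 ^ p * (2 * v + 3) by omega,
      show S.length + 1 - 2 ^ p * (2 * u + 3) = 2 ^ p * (2 * v + 1) by omega,
      h p v (by omega), neg_neg]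

theorem FoldRule.letter_two_pow_mul_odd {L : List ℤ} (h : FoldRule L) (p : ℕ) :
    ∀ u, 2 ^ p * (2 * u + 1) ≤ L.length →
      letter L (2 ^ p * (2 * u + 1)) = (-1) ^ u * letter L (2 ^ p)
  | 0, _ => by simp
  | u + 1, hu => by
    have e : 2 ^ p * (2 * (u + 1) + 1) = 2 ^ p * (2 * u + 3) := by ring
    have hle : 2 ^ p * (2 * u + 1) ≤ 2 ^ p * (2 * u + 3) := Nat.mul_le_mul_left _ (by omega)
    rw [e] at hu ⊢
    rw [h p u hu, h.letter_two_pow_mul_odd p u (by omega), pow_succ]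
    ring

theorem FoldRule.drop {N : ℕ} {L : List ℤ} (h : FoldRule L) (hL : L.length + 1 = 2 ^ (N + 1)) :
    FoldRule (L.drop (2 ^ N)) := by
  intro p v hb
  rw [List.length_drop] at hb
  rw [pow_succ] at hL
  obtain ⟨E, hE⟩ := exists_two_pow_eq (lt_of_two_pow_mul_lt (p := p) (u := v) (N := N)
    (by rw [pow_succ]; omega))
  have e1 : 2 ^ N + 2 ^ p * (2 * v + 1) = 2 ^ p * (2 * (v + E) + 1) := by rw [hE]; ring
  have e3 : 2 ^ N + 2 ^ p * (2 * v + 3) = 2 ^ p * (2 * (v + E) + 3) := by rw [hE]; ring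
  rw [letter_drop _ _ (by positivity), letter_drop _ _ (by positivity), e1, e3]
  exact h p (v + E) (by omega)

theorem FoldRule.letter_reflect {N : ℕ} {L : List ℤ} (h : FoldRule L)
    (hL : L.length + 1 = 2 ^ (N + 1)) {q : ℕ} (hq : 0 < q) (hqN : q < 2 ^ N) :
    letter L (2 ^ (N + 1) - q) = -letter L q := by
  obtain ⟨p, w, ⟨u, rfl⟩, rfl⟩ := Nat.exists_eq_two_pow_mul_odd hq.ne'
  have hp : 2 ^ p ≤ 2 ^ p * (2 * u + 1) := Nat.le_mul_of_pos_right _ (by omega)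
  obtain ⟨E, hE⟩ := exists_two_pow_eq ((Nat.pow_lt_pow_iff_right (by norm_num)).mp
    (lt_of_le_of_lt hp hqN))
  obtain ⟨v, rfl⟩ : ∃ v, E = u + 1 + v := by
    refine ⟨E - u - 1, ?_⟩
    by_contra hE'
    have := Nat.mul_le_mul_left (2 ^ p) (by omega : 2 * E ≤ 2 * u + 1)
    omega
  have e : 2 ^ (N + 1) - 2 ^ p * (2 * u + 1) = 2 ^ p * (2 * (u + 2 * v + 1) + 1) := by
    have : 2 ^ (N + 1) = 2 ^ p * (2 * u + 1) + 2 ^ p * (2 * (u + 2 * v + 1) + 1) := by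
      rw [pow_succ, hE]; ring
    omega
  rw [pow_succ] at hL
  rw [e, h.letter_two_pow_mul_odd p _ (by omega), h.letter_two_pow_mul_odd p u (by omega),
    pow_succ, pow_add, pow_mul]
  norm_num

theorem FoldRule.eq_negRev_append {N : ℕ} {L : List ℤ} (h : FoldRule L)
    (hL : L.length + 1 = 2 ^ (N + 1)) :
    L = negRev (L.drop (2 ^ N)) ++ letter L (2 ^ N) :: L.drop (2 ^ N) := by
  have hpow : 2 ^ (N + 1) = 2 * 2 ^ N := pow_succ' 2 N
  set S := L.drop (2 ^ N) with hS
  have hSlen : S.length + 1 = 2 ^ N := by rw [List.length_drop]; omega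
  refine ext_letter (by rw [length_negRev_append]; omega) fun q hq1 hq2 => ?_
  rcases lt_trichotomy q (2 ^ N) with hq | rfl | hq
  · rw [letter_negRev_append_of_le _ _ hq1 (by omega), hSlen, hS, letter_drop _ _ (by omega),
      show 2 ^ N + (2 ^ N - q) = 2 ^ (N + 1) - q by omega, h.letter_reflect hL hq1 hq, neg_neg]
  · have := letter_negRev_append_mid S (letter L (2 ^ N))
    rw [hSlen] at this
    exact this.symm
  · obtain ⟨r, rfl⟩ : ∃ r, q = S.length + 1 + r := ⟨q - 2 ^ N, by omega⟩
    rw [letter_negRev_append_add _ _ (by omega), hS, letter_drop _ _ (by omega), hSlen]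

theorem isFold_iff {N : ℕ} {L : List ℤ} :
    IsFold N L ↔ L.length + 1 = 2 ^ N ∧ (∀ x ∈ L, x = 1 ∨ x = -1) ∧ FoldRule L := by
  constructor
  · intro hL
    induction hL with
    | zero => exact ⟨rfl, by simp, fun p u hb => absurd hb (by simp)⟩
    | succ N S ε _ hε ih =>
      obtain ⟨hlen, hpm, hrule⟩ := ih
      refine ⟨by rw [length_negRev_append, pow_succ]; omega, fun x hx => ?_,
        hrule.negRev_append hlen ε⟩
      simp only [List.mem_append, List.mem_cons, mem_negRev] at hx
      rcases hx with hx | rfl | hx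
      · rcases hpm _ hx with h | h <;> omega
      · exact hε
      · exact hpm x hx
  · rintro ⟨hlen, hpm, hrule⟩
    induction N generalizing L with
    | zero =>
      rw [List.length_eq_zero_iff.mp (by simpa using hlen : L.length = 0)]
      exact .zero
    | succ N ih =>
      have hpow : 2 ^ (N + 1) = 2 * 2 ^ N := pow_succ' 2 N
      rw [hrule.eq_negRev_append hlen]
      refine .succ N _ _ (ih (by rw [List.length_drop]; omega)
        (fun x hx => hpm x (List.mem_of_mem_drop hx)) (hrule.drop hlen))
        (hpm _ (letter_mem Nat.one_le_two_pow (by omega)))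

theorem IsFold.eq_of_letter_two_pow_eq {N : ℕ} {L L' : List ℤ} (h : IsFold N L)
    (h' : IsFold N L') (hL : ∀ p < N, letter L (2 ^ p) = letter L' (2 ^ p)) : L = L' := by
  obtain ⟨hlen, -, hrule⟩ := isFold_iff.mp h
  obtain ⟨hlen', -, hrule'⟩ := isFold_iff.mp h'
  refine ext_letter (by omega) fun q hq1 hq2 => ?_
  obtain ⟨p, w, ⟨u, rfl⟩, rfl⟩ := Nat.exists_eq_two_pow_mul_odd (by omega : q ≠ 0)
  have hp : 2 ^ p ≤ 2 ^ p * (2 * u + 1) := Nat.le_mul_of_pos_right _ (by omega)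
  rw [hrule.letter_two_pow_mul_odd p u hq2, hrule'.letter_two_pow_mul_odd p u (by omega),
    hL p ((Nat.pow_lt_pow_iff_right (a := 2) (by norm_num)).mp (by omega))]

section Subword

variable (a : ℤ → ℤ) (h : ℤ)

theorem subwordAt_eq_map (t : ℕ) :
    subwordAt a h t = (List.range t).map fun i : ℕ => a (h + 1 + i) := by
  unfold subwordAt
  rw [bind_pure_comp, List.map_eq_map, List.map_map]
  rfl

theorem length_subwordAt (t : ℕ) : (subwordAt a h t).length = t := by
  simp [subwordAt_eq_map]

theorem letter_subwordAt {t q : ℕ} (hq : 0 < q) (hqt : q ≤ t) :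
    letter (subwordAt a h t) q = a (h + q) := by
  rw [letter, List.getD_eq_getElem _ _ (by rw [length_subwordAt]; omega)]
  simp only [subwordAt_eq_map, List.getElem_map, List.getElem_range]
  congr 1
  omega

theorem letter_subwordAt_two_pow {N p : ℕ} (hp : p < N) :
    letter (subwordAt a h (2 ^ N - 1)) (2 ^ p) = a (h + 2 ^ p) := by
  have : 2 ^ p < 2 ^ N := Nat.pow_lt_pow_right (by norm_num) hp
  rw [letter_subwordAt _ _ (by positivity) (by omega)]
  push_cast
  rfl

end Subword

theorem isFold_subwordAt_iff {a : ℤ → ℤ} (hpm : PM a) (h : ℤ) (N : ℕ) :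
    IsFold N (subwordAt a h (2 ^ N - 1)) ↔
      ∀ p u : ℕ, 2 ^ p * (2 * u + 3) < 2 ^ N →
        a (h + 2 ^ p * (2 * u + 3)) = -a (h + 2 ^ p * (2 * u + 1)) := by
  have hN : 0 < 2 ^ N := by positivity
  have hpm' : ∀ x ∈ subwordAt a h (2 ^ N - 1), x = 1 ∨ x = -1 := by
    simp only [subwordAt_eq_map, List.mem_map]
    rintro _ ⟨i, -, rfl⟩
    exact hpm _
  rw [isFold_iff, length_subwordAt, Nat.sub_add_cancel hN, eq_self, true_and, and_iff_right hpm']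
  unfold FoldRule
  rw [length_subwordAt]
  refine forall₂_congr fun p u => ?_
  have hp : 0 < 2 ^ p * (2 * u + 1) := by positivity
  have hle : 2 ^ p * (2 * u + 1) ≤ 2 ^ p * (2 * u + 3) := Nat.mul_le_mul_left _ (by omega)
  refine ⟨fun H hlt => ?_, fun H hle' => ?_⟩
  · have := H (by omega)
    rwa [letter_subwordAt _ _ (by omega) (by omega), letter_subwordAt _ _ hp (by omega)] at this
  · rw [letter_subwordAt _ _ (by omega) hle', letter_subwordAt _ _ hp (by omega)]
    push_cast
    exact H (by omega)

section Alternation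

variable {a : ℤ → ℤ} {j : ℕ} {x : ℤ}

theorem PM.ne_zero (hpm : PM a) (x : ℤ) : a x ≠ 0 := by
  rcases hpm x with h | h <;> simp [h]

theorem AltProp.apply_add (hx : AltProp a j x) : a (x + 2 ^ (j + 1)) = -a x := by
  simpa using hx 1

theorem AltProp.add_mul (hx : AltProp a j x) (c : ℤ) : AltProp a j (x + c * 2 ^ (j + 1)) := by
  intro k
  rw [show x + c * 2 ^ (j + 1) + k * 2 ^ (j + 1) = x + (c + k) * 2 ^ (j + 1) by ring, hx, hx c]
  by_cases hc : Even c <;> by_cases hk : Even k <;> simp [hc, hk, Int.even_add]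

theorem AltProp.apply_add_succ (hx : AltProp a j x) (k : ℤ) :
    a (x + (k + 1) * 2 ^ (j + 1)) = -a (x + k * 2 ^ (j + 1)) := by
  rw [← AltProp.apply_add (AltProp.add_mul hx k)]
  ring_nf

theorem AltProp.apply_add_two_pow (hx : AltProp a j x) {j' : ℕ} (hj : j < j') :
    a (x + 2 ^ (j' + 1)) = a x := by
  have := hx (2 ^ (j' - j))
  rwa [if_pos (even_two.pow_of_ne_zero (by omega)), ← pow_add,
    show j' - j + (j + 1) = j' + 1 by omega] at this

theorem AltProp.eq_of_altProp {j' : ℕ} (hx : a x ≠ 0) (h : AltProp a j x)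
    (h' : AltProp a j' x) : j = j' := by
  by_contra hne
  wlog hlt : j < j' generalizing j j'
  · exact this h' h (Ne.symm hne) (by omega)
  have := AltProp.apply_add h'
  rw [AltProp.apply_add_two_pow h hlt] at this
  exact hx (by linarith)

end Alternation

/-- The abstract shape of the terms of a complete folding sequence lying at levels `≥ k`, read as
`D k t = a (g k + t * 2 ^ k)`: the even-indexed terms are those of level `k` and alternate, the
odd-indexed ones are, up to a shift, the terms at levels `≥ k + 1`. -/
structure IsFoldTower (D : ℕ → ℤ → ℤ) : Prop where
  pm_zero : ∀ k, D k 0 = 1 ∨ D k 0 = -1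
  even : ∀ k i, D k (2 * i) = if Even i then D k 0 else -D k 0
  odd : ∀ k, ∃ c, ∀ i, D k (2 * i + 1) = D (k + 1) (i + c)

namespace IsFoldTower

variable {D : ℕ → ℤ → ℤ}

theorem exists_forall_even_eq (hD : IsFoldTower D) (k : ℕ) {s : ℤ} (hs : s = 1 ∨ s = -1) :
    ∃ p, ∀ i, D k (2 * (2 * i + p)) = s := by
  rcases (by rcases hD.pm_zero k with h | h <;> omega : s = D k 0 ∨ s = -D k 0) with h | h
  · exact ⟨0, fun i => by rw [hD.even, add_zero, if_pos (even_two_mul i), h]⟩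
  · exact ⟨1, fun i => by rw [hD.even, if_neg (Int.not_even_two_mul_add_one i), h]⟩

theorem even_add_two (hD : IsFoldTower D) (k : ℕ) (i : ℤ) : D k (2 * i + 2) = -D k (2 * i) := by
  rw [show 2 * i + 2 = 2 * (i + 1) by ring, hD.even, hD.even]
  by_cases hi : Even i <;> simp [hi]

theorem exists_eq (hD : IsFoldTower D) (k : ℕ) {s : ℤ} (hs : s = 1 ∨ s = -1) (e : ℤ) :
    ∃ t, D k (2 * t + e) = s := by
  obtain ⟨r, rfl | rfl⟩ := Int.even_or_odd' e
  · obtain ⟨p, hp⟩ := hD.exists_forall_even_eq k hs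
    exact ⟨p - r, by rw [← hp 0]; congr 1; ring⟩
  · obtain ⟨c, hc⟩ := hD.odd k
    obtain ⟨p, hp⟩ := hD.exists_forall_even_eq (k + 1) hs
    exact ⟨2 * p - r - c, by rw [← hp 0, show 2 * (2 * p - r - c) + (2 * r + 1) =
      2 * (2 * p - c) + 1 by ring, hc]; congr 1; ring⟩

theorem exists_eq_neg (hD : IsFoldTower D) (k : ℕ) {s : ℤ} (hs : s = 1 ∨ s = -1) (e : ℤ) :
    ∃ t, D k (2 * t + e) = s ∧ D k (2 * t + e + 1) = -s := by
  obtain ⟨c, hc⟩ := hD.odd k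
  obtain ⟨r, rfl | rfl⟩ := Int.even_or_odd' e
  · obtain ⟨p, hp⟩ := hD.exists_forall_even_eq k hs
    obtain ⟨i, hi⟩ := hD.exists_eq (k + 1) (by omega : -s = 1 ∨ -s = -1) (p + c)
    refine ⟨2 * i + p - r, ?_, ?_⟩
    · rw [← hp i]; congr 1; ring
    · rw [← hi, show 2 * (2 * i + p - r) + 2 * r + 1 = 2 * (2 * i + p) + 1 by ring, hc]
      congr 1; ring
  · obtain ⟨p, hp⟩ := hD.exists_forall_even_eq k (by omega : -s = 1 ∨ -s = -1)
    obtain ⟨i, hi⟩ := hD.exists_eq (k + 1) hs (p - 1 + c)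
    refine ⟨2 * i + p - 1 - r, ?_, ?_⟩
    · rw [← hi, show 2 * (2 * i + p - 1 - r) + (2 * r + 1) = 2 * (2 * i + p - 1) + 1 by ring, hc]
      congr 1; ring
    · rw [← hp i]; congr 1; ring

theorem exists_eq_eq_neg (hD : IsFoldTower D) (k : ℕ) {σ τ : ℤ} (hσ : σ = 1 ∨ σ = -1)
    (hτ : τ = 1 ∨ τ = -1) (e : ℤ) :
    ∃ t, D k (2 * t + e) = σ ∧ D k (2 * t + e + 1) = τ ∧ D k (2 * t + e + 2) = -σ := by
  obtain ⟨c, hc⟩ := hD.odd k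
  obtain ⟨r, rfl | rfl⟩ := Int.even_or_odd' e
  · obtain ⟨p, hp⟩ := hD.exists_forall_even_eq k hσ
    obtain ⟨i, hi⟩ := hD.exists_eq (k + 1) hτ (p + c)
    refine ⟨2 * i + p - r, ?_, ?_, ?_⟩
    · rw [← hp i]; congr 1; ring
    · rw [← hi, show 2 * (2 * i + p - r) + 2 * r + 1 = 2 * (2 * i + p) + 1 by ring, hc]
      congr 1; ring
    · rw [← hp i, show 2 * (2 * i + p - r) + 2 * r + 2 = 2 * (2 * i + p) + 2 by ring,
        hD.even_add_two]
  · obtain ⟨p, hp⟩ := hD.exists_forall_even_eq k hτ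
    obtain ⟨i, hi₁, hi₂⟩ := hD.exists_eq_neg (k + 1) hσ (p - 1 + c)
    refine ⟨2 * i + p - 1 - r, ?_, ?_, ?_⟩
    · rw [← hi₁, show 2 * (2 * i + p - 1 - r) + (2 * r + 1) = 2 * (2 * i + p - 1) + 1 by ring,
        hc]
      congr 1; ring
    · rw [← hp i]; congr 1; ring
    · rw [← hi₂, show 2 * (2 * i + p - 1 - r) + (2 * r + 1) + 2 = 2 * (2 * i + p) + 1 by ring,
        hc]
      congr 1; ring

end IsFoldTower

section Witnesses

variable {a : ℤ → ℤ} {g : ℕ → ℤ}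

theorem witness_ne_add_mul (hpm : PM a) (halt : ∀ j, AltProp a j (g j)) {j j' : ℕ}
    (hj : j < j') (c : ℤ) : g j' ≠ g j + c * 2 ^ (j + 1) := fun he =>
  hj.ne (AltProp.eq_of_altProp (PM.ne_zero hpm _) (he ▸ AltProp.add_mul (halt j) c) (halt j'))

theorem exists_witness_eq_add_two_pow (hpm : PM a) (halt : ∀ j, AltProp a j (g j)) {j j' : ℕ}
    (hj : j < j') : ∃ c : ℤ, g j' = g j + 2 ^ j + c * 2 ^ (j + 1) := by
  induction j generalizing j' with
  | zero =>
    obtain ⟨k, hk | hk⟩ := Int.even_or_odd' (g j' - g 0)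
    · exact absurd (by linear_combination hk) (witness_ne_add_mul hpm halt hj k)
    · exact ⟨k, by linear_combination hk⟩
  | succ j ih =>
    obtain ⟨c, hc⟩ := ih (j' := j') (by omega)
    obtain ⟨c', hc'⟩ := ih (j' := j + 1) (by omega)
    obtain ⟨k, hk | hk⟩ := Int.even_or_odd' (c - c')
    · refine absurd ?_ (witness_ne_add_mul hpm halt hj k)
      rw [pow_succ] at *
      linear_combination hc - hc' + 2 ^ j * 2 * hk
    · refine ⟨k, ?_⟩
      rw [pow_succ] at *
      linear_combination hc - hc' + 2 ^ j * 2 * hk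

theorem eq_witness_or_eq_add_two_pow (hpm : PM a) (halt : ∀ j, AltProp a j (g j)) (J : ℕ)
    (x : ℤ) :
    (∃ j ≤ J, ∃ k : ℤ, x = g j + k * 2 ^ (j + 1)) ∨
      ∃ c : ℤ, x = g J + 2 ^ J + c * 2 ^ (J + 1) := by
  induction J with
  | zero =>
    obtain ⟨k, hk | hk⟩ := Int.even_or_odd' (x - g 0)
    · exact .inl ⟨0, le_rfl, k, by linear_combination hk⟩
    · exact .inr ⟨k, by linear_combination hk⟩
  | succ J ih =>
    rcases ih with ⟨j, hj, k, hk⟩ | ⟨c, hc⟩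
    · exact .inl ⟨j, by omega, k, hk⟩
    obtain ⟨c', hc'⟩ := exists_witness_eq_add_two_pow hpm halt (lt_add_one J)
    obtain ⟨k, hk | hk⟩ := Int.even_or_odd' (c - c')
    · refine .inl ⟨J + 1, le_rfl, k, ?_⟩
      rw [pow_succ] at *
      linear_combination hc - hc' + 2 ^ J * 2 * hk
    · refine .inr ⟨k, ?_⟩
      rw [pow_succ] at *
      linear_combination hc - hc' + 2 ^ J * 2 * hk

theorem exists_eq_witness_of_alternating (hpm : PM a) (halt : ∀ j, AltProp a j (g j)) (j : ℕ)
    (x : ℤ)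
    (hx : ∀ k : ℕ, k < 3 → a (x + (k + 1) * 2 ^ (j + 1)) = -a (x + k * 2 ^ (j + 1))) :
    ∃ c : ℤ, x = g j + c * 2 ^ (j + 1) := by
  have h1 := hx 0 (by norm_num)
  have h2 := hx 1 (by norm_num)
  have h3 := hx 2 (by norm_num)
  push_cast at h1 h2 h3
  norm_num at h1 h2
  rcases eq_witness_or_eq_add_two_pow hpm halt j x with ⟨j', hj', k, hk⟩ | ⟨c, hc⟩
  · rcases hj'.lt_or_eq with hlt | rfl
    · have := AltProp.apply_add_two_pow (hk ▸ AltProp.add_mul (halt j') k) hlt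
      exact absurd (by linarith) (PM.ne_zero hpm x)
    · exact ⟨k, hk⟩
  -- `x` lies above level `j`, so either `x` or `x + 2 ^ (j + 1)` is in the class of level `j + 1`,
  -- whose terms alternate with step `2 ^ (j + 2)`; this contradicts `h1`–`h3`.
  obtain ⟨c', hc'⟩ := exists_witness_eq_add_two_pow hpm halt (lt_add_one j)
  obtain ⟨k, hk | hk⟩ := Int.even_or_odd' (c - c')
  · have hx' : x = g (j + 1) + k * 2 ^ (j + 1 + 1) := by
      rw [pow_succ] at *
      linear_combination hc - hc' + 2 ^ j * 2 * hk
    have := AltProp.apply_add (hx' ▸ AltProp.add_mul (halt (j + 1)) k)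
    rw [show x + 2 ^ (j + 1 + 1) = x + 2 * 2 ^ (j + 1) by ring] at this
    exact absurd (by linarith) (PM.ne_zero hpm x)
  · have hx' : x + 2 ^ (j + 1) = g (j + 1) + (k + 1) * 2 ^ (j + 1 + 1) := by
      rw [pow_succ] at *
      linear_combination hc - hc' + 2 ^ j * 2 * hk
    have := AltProp.apply_add (hx' ▸ AltProp.add_mul (halt (j + 1)) (k + 1))
    rw [show x + 2 ^ (j + 1) + 2 ^ (j + 1 + 1) = x + 3 * 2 ^ (j + 1) by ring] at this
    exact absurd (by linarith) (PM.ne_zero hpm (x + 2 ^ (j + 1)))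

theorem isFoldTower_of_witnesses (hpm : PM a) (halt : ∀ j, AltProp a j (g j)) :
    IsFoldTower fun k t => a (g k + t * 2 ^ k) where
  pm_zero k := hpm _
  even k i := by
    simpa [show 2 * i * 2 ^ k = i * 2 ^ (k + 1) by ring] using halt k i
  odd k := by
    obtain ⟨c, hc⟩ := exists_witness_eq_add_two_pow hpm halt (lt_add_one k)
    exact ⟨-c, fun i => by rw [hc, pow_succ]; ring_nf⟩

theorem altProp_aligned_add_two_pow (hpm : PM a) (halt : ∀ j, AltProp a j (g j)) {m p : ℕ}
    (hp : p ≤ m) (s : ℤ) : AltProp a p (g (m + 1) + s * 2 ^ (m + 1) + 2 ^ p) := by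
  obtain ⟨c, hc⟩ := exists_witness_eq_add_two_pow hpm halt (Nat.lt_succ_of_le hp)
  have hpow : (2 : ℤ) ^ (m + 1) = 2 ^ (m - p) * 2 ^ (p + 1) := by
    rw [← pow_add]; congr 1; omega
  rw [show g (m + 1) + s * 2 ^ (m + 1) + 2 ^ p = g p + (1 + c + s * 2 ^ (m - p)) * 2 ^ (p + 1) by
    rw [hc, hpow, pow_succ]; ring]
  exact AltProp.add_mul (halt p) _

theorem apply_aligned_add_two_pow_eq (hpm : PM a) (halt : ∀ j, AltProp a j (g j)) {m p : ℕ}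
    (hp : p < m) (s s' : ℤ) :
    a (g (m + 1) + s * 2 ^ (m + 1) + 2 ^ p) = a (g (m + 1) + s' * 2 ^ (m + 1) + 2 ^ p) := by
  have := altProp_aligned_add_two_pow hpm halt hp.le s ((s' - s) * 2 ^ (m - p))
  rw [if_pos ((even_two.pow_of_ne_zero (by omega)).mul_left _)] at this
  rw [← this, mul_assoc, ← pow_add, show m - p + (p + 1) = m + 1 by omega]
  ring_nf

theorem le_or_eq_of_two_pow_mul_lt {p u m : ℕ} (h : 2 ^ p * (2 * u + 3) < 2 ^ (m + 3)) :
    p ≤ m ∨ p = m + 1 ∧ u = 0 := by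
  have hp := lt_of_two_pow_mul_lt (N := m + 2) h
  rcases Nat.lt_or_ge p (m + 1) with hp' | hp'
  · exact .inl (by omega)
  obtain rfl : p = m + 1 := by omega
  rw [show 2 ^ (m + 3) = 2 ^ (m + 1) * 4 by ring] at h
  have := Nat.lt_of_mul_lt_mul_left h
  exact .inr ⟨rfl, by omega⟩

theorem isFold_subwordAt_iff_exists (hpm : PM a) (halt : ∀ j, AltProp a j (g j)) (m : ℕ)
    (h : ℤ) : IsFold (m + 3) (subwordAt a h (2 ^ (m + 3) - 1)) ↔
      ∃ s : ℤ, h = g (m + 1) + s * 2 ^ (m + 1) ∧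
        a (h + 3 * 2 ^ (m + 1)) = -a (h + 2 ^ (m + 1)) := by
  have hodd : ∀ (p : ℕ) (u : ℤ), h + 2 ^ p * (2 * u + 1) = h + 2 ^ p + u * 2 ^ (p + 1) :=
    fun p u => by ring
  have hodd' : ∀ (p : ℕ) (u : ℤ),
      h + 2 ^ p * (2 * u + 3) = h + 2 ^ p + (u + 1) * 2 ^ (p + 1) :=
    fun p u => by ring
  rw [isFold_subwordAt_iff hpm h]
  constructor
  · intro hrule
    obtain ⟨c, hc⟩ := exists_eq_witness_of_alternating hpm halt m (h + 2 ^ m) fun k hk => by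
      have h7 : 2 ^ m * (2 * k + 3) ≤ 2 ^ m * 7 := Nat.mul_le_mul_left _ (by omega)
      have h8 : 2 ^ (m + 3) = 2 ^ m * 8 := by ring
      have := hrule m k (by have := Nat.one_le_two_pow (n := m); omega)
      rwa [hodd, hodd'] at this
    obtain ⟨c', hc'⟩ := exists_witness_eq_add_two_pow hpm halt (lt_add_one m)
    refine ⟨c - c' - 1, by rw [pow_succ] at *; linear_combination hc - hc', ?_⟩
    have := hrule (m + 1) 0 (by
      rw [show 2 ^ (m + 3) = 2 ^ (m + 1) * 4 by ring]
      have := Nat.one_le_two_pow (n := m + 1)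
      omega)
    rwa [hodd, hodd', Nat.cast_zero, zero_add, one_mul, zero_mul, add_zero,
      show h + 2 ^ (m + 1) + 2 ^ (m + 1 + 1) = h + 3 * 2 ^ (m + 1) by ring] at this
  · rintro ⟨s, rfl, hflip⟩ p u hpu
    rcases le_or_eq_of_two_pow_mul_lt hpu with hp | ⟨rfl, rfl⟩
    · rw [hodd, hodd']
      exact AltProp.apply_add_succ (altProp_aligned_add_two_pow hpm halt hp s) u
    · convert hflip using 2
      · push_cast; ring
      · congr 1; push_cast; ring

theorem exists_aligned_eq (hpm : PM a) (halt : ∀ j, AltProp a j (g j)) (m : ℕ)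
    {σ₁ σ₂ σ₃ : ℤ} (h₁ : σ₁ = 1 ∨ σ₁ = -1) (h₂ : σ₂ = 1 ∨ σ₂ = -1) (h₃ : σ₃ = 1 ∨ σ₃ = -1) :
    ∃ s : ℤ, a (g (m + 1) + s * 2 ^ (m + 1) + 2 ^ m) = σ₁ ∧
      a (g (m + 1) + s * 2 ^ (m + 1) + 2 ^ (m + 1)) = σ₂ ∧
      a (g (m + 1) + s * 2 ^ (m + 1) + 2 ^ (m + 2)) = σ₃ ∧
      a (g (m + 1) + s * 2 ^ (m + 1) + 3 * 2 ^ (m + 1)) = -σ₂ := by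
  have hD := isFoldTower_of_witnesses hpm halt
  obtain ⟨c, hc⟩ := exists_witness_eq_add_two_pow hpm halt (lt_add_one m)
  obtain ⟨p, hp⟩ := hD.exists_forall_even_eq m h₁
  obtain ⟨t, ht₁, ht₂, ht₃⟩ := hD.exists_eq_eq_neg (m + 1) h₂ h₃ (p - c)
  -- With this `s`, position `2 ^ m` of the word is the term `2 * (2 * t + p)` of the tower at
  -- level `m`, and positions `2 ^ (m + 1) * (1 + i)` are the terms `2 * t + (p - c) + i` at `m + 1`.
  refine ⟨2 * t + p - c - 1, ?_, ?_, ?_, ?_⟩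
  · rw [← hp t, hc]; congr 1; rw [pow_succ]; ring
  · rw [← ht₁]; congr 1; ring
  · rw [← ht₂]; congr 1; rw [pow_succ]; ring
  · rw [← ht₃]; congr 1; ring

def topLetters (m : ℕ) (T : List ℤ) : ℤ × ℤ × ℤ :=
  (letter T (2 ^ m), letter T (2 ^ (m + 1)), letter T (2 ^ (m + 2)))

theorem isFold_and_isSubword_iff (hpm : PM a) (halt : ∀ j, AltProp a j (g j)) (m : ℕ)
    {T : List ℤ} : IsFold (m + 3) T ∧ IsSubword a T ↔
      ∃ s : ℤ, a (g (m + 1) + s * 2 ^ (m + 1) + 3 * 2 ^ (m + 1)) =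
          -a (g (m + 1) + s * 2 ^ (m + 1) + 2 ^ (m + 1)) ∧
        T = subwordAt a (g (m + 1) + s * 2 ^ (m + 1)) (2 ^ (m + 3) - 1) := by
  constructor
  · rintro ⟨hT, h, hTh⟩
    have hlen : T.length = 2 ^ (m + 3) - 1 := by have := (isFold_iff.mp hT).1; omega
    rw [hlen] at hTh
    subst hTh
    obtain ⟨s, rfl, hflip⟩ := (isFold_subwordAt_iff_exists hpm halt m h).mp hT
    exact ⟨s, hflip, rfl⟩
  · rintro ⟨s, hflip, rfl⟩
    exact ⟨(isFold_subwordAt_iff_exists hpm halt m _).mpr ⟨s, rfl, hflip⟩, _,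
      by rw [length_subwordAt]⟩

theorem injOn_topLetters (hpm : PM a) (halt : ∀ j, AltProp a j (g j)) (m : ℕ) :
    Set.InjOn (topLetters m) {T | IsFold (m + 3) T ∧ IsSubword a T} := by
  intro T hT T' hT' htop
  obtain ⟨s, -, rfl⟩ := (isFold_and_isSubword_iff hpm halt m).mp hT
  obtain ⟨s', -, rfl⟩ := (isFold_and_isSubword_iff hpm halt m).mp hT'
  simp only [topLetters, Prod.mk.injEq, letter_subwordAt_two_pow _ _ (show m < m + 3 by omega),
    letter_subwordAt_two_pow _ _ (show m + 1 < m + 3 by omega),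
    letter_subwordAt_two_pow _ _ (show m + 2 < m + 3 by omega)] at htop
  refine IsFold.eq_of_letter_two_pow_eq hT.1 hT'.1 fun p hp => ?_
  rw [letter_subwordAt_two_pow _ _ hp, letter_subwordAt_two_pow _ _ hp]
  rcases (by omega : p < m ∨ p = m ∨ p = m + 1 ∨ p = m + 2) with hp | rfl | rfl | rfl
  · exact apply_aligned_add_two_pow_eq hpm halt hp s s'
  · exact htop.1
  · exact htop.2.1
  · exact htop.2.2

theorem image_topLetters (hpm : PM a) (halt : ∀ j, AltProp a j (g j)) (m : ℕ) :
    topLetters m '' {T | IsFold (m + 3) T ∧ IsSubword a T} =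
      ((({1, -1} : Finset ℤ) ×ˢ ({1, -1} : Finset ℤ) ×ˢ ({1, -1} : Finset ℤ) :
        Finset (ℤ × ℤ × ℤ)) : Set (ℤ × ℤ × ℤ)) := by
  ext ⟨σ₁, σ₂, σ₃⟩
  simp only [Set.mem_image, Set.mem_ofPred_eq, Finset.coe_product, Set.mem_prod,
    Finset.coe_insert, Finset.coe_singleton, Set.mem_insert_iff, Set.mem_singleton_iff]
  constructor
  · rintro ⟨T, hT, hσ⟩
    obtain ⟨s, -, rfl⟩ := (isFold_and_isSubword_iff hpm halt m).mp hT
    simp only [topLetters, Prod.mk.injEq,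
      letter_subwordAt_two_pow _ _ (show m < m + 3 by omega),
      letter_subwordAt_two_pow _ _ (show m + 1 < m + 3 by omega),
      letter_subwordAt_two_pow _ _ (show m + 2 < m + 3 by omega)] at hσ
    obtain ⟨rfl, rfl, rfl⟩ := hσ
    exact ⟨hpm _, hpm _, hpm _⟩
  · rintro ⟨h₁, h₂, h₃⟩
    obtain ⟨s, e₁, e₂, e₃, hflip⟩ := exists_aligned_eq hpm halt m h₁ h₂ h₃
    refine ⟨_, (isFold_and_isSubword_iff hpm halt m).mpr ⟨s, by rw [hflip, e₂], rfl⟩, ?_⟩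
    simp only [topLetters, letter_subwordAt_two_pow _ _ (show m < m + 3 by omega),
      letter_subwordAt_two_pow _ _ (show m + 1 < m + 3 by omega),
      letter_subwordAt_two_pow _ _ (show m + 2 < m + 3 by omega), e₁, e₂, e₃]

end Witnesses

end Folding

theorem statement16 (a : ℤ → ℤ) (ha : CompleteFold a) (n : ℕ) (hn : 3 ≤ n) :
    Set.ncard {T : List ℤ | IsFold n T ∧ IsSubword a T} = 8 := by
  obtain ⟨m, rfl⟩ : ∃ m, n = m + 3 := ⟨n - 3, by omega⟩
  obtain ⟨hpm, hwit⟩ := ha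
  choose g halt using hwit
  rw [← (Folding.injOn_topLetters hpm halt m).ncard_image, Folding.image_topLetters hpm halt m,
    Set.ncard_coe_finset]
  rfl
end
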